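/- arXiv:1609.04439 — 4 statements merged into one kernel-verified Lean document; each statement's English description precedes it below -/
import Mathlib

section
/- For all m, n ≥ 3 there exist regular languages L' and L, with alphabets Σ_{L'} and Σ_L each of cardinality 3 whose intersection has cardinality 2 (so Σ_{L'} \ Σ_L and Σ_L \ Σ_{L'} are both nonempty), such that L' has quotient complexity m, L has quotient complexity n, and the product L'·L has quotient complexity exactly m·2^n + 2^(n-1). -/
/-- The alphabet of a language: letters occurring in some word of `L`. -/
def alphabetOf {α : Type*} (L : Language α) : Set α :=
  {a | ∃ u v : List α, u ++ [a] ++ v ∈ L}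

/-- The left quotient of `L` by a word `w`. -/
def leftQuotient {α : Type*} (L : Language α) (w : List α) : Language α :=
  {x | w ++ x ∈ L}

/-- The set of left quotients of `L` by words over the alphabet of `L`. -/
def quotientSet {α : Type*} (L : Language α) : Set (Language α) :=
  {K | ∃ w : List α, (∀ a ∈ w, a ∈ alphabetOf L) ∧ K = leftQuotient L w}

/-- `L` is regular with quotient complexity `m`: the set of its left quotients
(by words over its own alphabet) is finite of cardinality exactly `m`. -/
def HasComplexity {α : Type*} (L : Language α) (m : ℕ) : Prop :=
  (quotientSet L).Finite ∧ (quotientSet L).ncard = m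

/-- All words whose letters lie in `S`. -/
def starOf {α : Type*} (S : Set α) : Language α :=
  {w | ∀ a ∈ w, a ∈ S}

/-- A nonempty language `L` is a right ideal if `L · Σ_L^* = L`. -/
def IsRightIdeal {α : Type*} (L : Language α) : Prop :=
  (∃ w, w ∈ L) ∧ L * starOf (alphabetOf L) = L

/-- A nonempty language `L` is a left ideal if `Σ_L^* · L = L`. -/
def IsLeftIdeal {α : Type*} (L : Language α) : Prop :=
  (∃ w, w ∈ L) ∧ starOf (alphabetOf L) * L = L

/-- A nonempty language `L` is a two-sided ideal if `Σ_L^* · L · Σ_L^* = L`. -/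
def IsTwoSidedIdeal {α : Type*} (L : Language α) : Prop :=
  (∃ w, w ∈ L) ∧ starOf (alphabetOf L) * L * starOf (alphabetOf L) = L

/-!
Take `L' = {w ∈ {0,1,2}* : |w|₀ ≡ -1 (mod m)}` and `L = {w ∈ {0,1,3}* : |w|₁ ≡ -1 (mod n)}`.
The quotient of `L' L` by `w` is determined by a state: the `0`-counter of `L'` after `w`
(or `none` once a `3` has been read), together with the set of values of the `1`-counters of `L`
started wherever a prefix of `w` lies in `L'` (a `2` kills them). Every such state is reached,
except those whose `L'`-counter sits at `-1` without the `L`-counter value `0`: the set of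
`L`-counters is built by inserting `0` with a full turn `0 ^ m` and rotating with blocks of `1`s,
and then `3` or a block of `0`s sets the first component. Distinct states give distinct
quotients: `0 ^ k 2 1 ^ (n - 1)` detects the first component and `3 1 ^ k` the second. This
leaves `(m + 1) 2 ^ n - 2 ^ (n - 1)` quotients.
-/

open List

lemma ZMod.eq_neg_one_of_natCast_eq_neg_one {m : ℕ} [NeZero m] {p : ZMod m} {j : ℕ}
    (hj : j ≤ p.val) (h : (j : ZMod m) = -1) : p = -1 := by
  obtain ⟨k, rfl⟩ := Nat.exists_eq_succ_of_ne_zero (NeZero.ne m)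
  have hjk : j = k := by
    rw [← ZMod.val_neg_one k, ← h, ZMod.val_natCast_of_lt (hj.trans_lt p.val_lt)]
  apply ZMod.val_injective
  have := p.val_lt
  rw [ZMod.val_neg_one]
  omega

lemma ZMod.zero_ne_neg_one {m : ℕ} (hm : 2 ≤ m) : (0 : ZMod m) ≠ -1 := by
  have : Fact (1 < m) := ⟨hm⟩
  exact fun h => one_ne_zero (neg_eq_zero.1 h.symm)

lemma List.suffix_of_append_eq_append_cons {α : Type*} {u v l₁ l₂ : List α} {c : α}
    (h : u ++ v = l₁ ++ c :: l₂) (hc : c ∉ v) : v <:+ l₂ := by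
  rcases append_eq_append_iff.1 h with ⟨d, rfl, hv⟩ | ⟨d, rfl, hd⟩
  · exact absurd (hv ▸ mem_append_right _ mem_cons_self) hc
  · rcases d with _ | ⟨e, d⟩
    · rw [nil_append] at hd
      exact absurd (hd ▸ mem_cons_self) hc
    · simp only [cons_append, cons.injEq] at hd
      exact ⟨d, hd.2.symm⟩

section Counter

variable {α : Type*}

lemma mem_alphabetOf_iff {L : Language α} {a : α} :
    a ∈ alphabetOf L ↔ ∃ w ∈ L, a ∈ w := by
  constructor
  · rintro ⟨u, v, h⟩
    exact ⟨_, h, by simp⟩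
  · rintro ⟨w, hw, ha⟩
    obtain ⟨s, t, rfl⟩ := append_of_mem ha
    exact ⟨s, t, by simpa using hw⟩

lemma alphabetOf_mul {A B : Language α} (hA : ∃ x, x ∈ A) (hB : ∃ y, y ∈ B) :
    alphabetOf (A * B) = alphabetOf A ∪ alphabetOf B := by
  obtain ⟨x, hx⟩ := hA
  obtain ⟨y, hy⟩ := hB
  ext c
  simp only [Set.mem_union, mem_alphabetOf_iff, Language.mem_mul]
  constructor
  · rintro ⟨_, ⟨u, hu, v, hv, rfl⟩, hc⟩
    rcases mem_append.1 hc with hc | hc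
    exacts [Or.inl ⟨u, hu, hc⟩, Or.inr ⟨v, hv, hc⟩]
  · rintro (⟨u, hu, hc⟩ | ⟨v, hv, hc⟩)
    exacts [⟨_, ⟨u, hu, y, hy, rfl⟩, mem_append_left _ hc⟩,
      ⟨_, ⟨x, hx, v, hv, rfl⟩, mem_append_right _ hc⟩]

lemma mem_leftQuotient {L : Language α} {w x : List α} : x ∈ leftQuotient L w ↔ w ++ x ∈ L :=
  Iff.rfl

lemma mem_leftQuotient_mul {A B : Language α} {w x : List α} :
    x ∈ leftQuotient (A * B) w ↔
      x ∈ leftQuotient A w * B ∨ ∃ u v, w = u ++ v ∧ u ∈ A ∧ v ++ x ∈ B := by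
  simp only [mem_leftQuotient, Language.mem_mul]
  constructor
  · rintro ⟨u, hu, v, hv, huv⟩
    rcases append_eq_append_iff.1 huv with ⟨c, rfl, rfl⟩ | ⟨c, rfl, rfl⟩
    exacts [Or.inr ⟨u, c, rfl, hu, hv⟩, Or.inl ⟨c, hu, v, hv, rfl⟩]
  · rintro (⟨c, hc, v, hv, rfl⟩ | ⟨u, v, rfl, hu, hv⟩)
    exacts [⟨_, hc, v, hv, append_assoc _ _ _⟩,
      ⟨u, hu, _, hv, (append_assoc _ _ _).symm⟩]

variable [DecidableEq α] {m : ℕ} {a b : α} {p : ZMod m}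

/-- The words avoiding `b` that take a counter of `a`'s modulo `m` from `p` to `-1`. -/
def counterLang (m : ℕ) (a b : α) (p : ZMod m) : Language α :=
  {x | b ∉ x ∧ p + x.count a = -1}

lemma mem_counterLang {x : List α} :
    x ∈ counterLang m a b p ↔ b ∉ x ∧ p + x.count a = -1 :=
  Iff.rfl

lemma leftQuotient_counterLang {w : List α} (hw : b ∉ w) :
    leftQuotient (counterLang m a b p) w = counterLang m a b (p + w.count a) := by
  ext x
  simp [mem_leftQuotient, mem_counterLang, count_append, hw, add_assoc]

lemma leftQuotient_counterLang_of_mem {w : List α} (hw : b ∈ w) :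
    leftQuotient (counterLang m a b p) w = 0 := by
  ext x
  simp [mem_leftQuotient, mem_counterLang, hw, Language.notMem_zero]

lemma replicate_mem_counterLang (hab : a ≠ b) {k : ℕ} :
    replicate k a ∈ counterLang m a b p ↔ p + k = -1 := by
  simp [mem_counterLang, mem_replicate, hab.symm]

lemma replicate_val_mem_counterLang [NeZero m] (hab : a ≠ b) :
    replicate (-1 - p).val a ∈ counterLang m a b p := by
  rw [replicate_mem_counterLang hab, ZMod.natCast_zmod_val]
  ring

lemma counterLang_injective [NeZero m] (hab : a ≠ b) :
    Function.Injective (counterLang m a b) := by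
  intro p q h
  have hp := replicate_val_mem_counterLang (p := p) hab
  rw [h, replicate_mem_counterLang hab, ZMod.natCast_zmod_val] at hp
  linear_combination -hp

lemma alphabetOf_counterLang [NeZero m] (hab : a ≠ b) :
    alphabetOf (counterLang m a b p) = {b}ᶜ := by
  ext c
  rw [mem_alphabetOf_iff, Set.mem_compl_singleton_iff]
  constructor
  · rintro ⟨w, hw, hc⟩ rfl
    exact hw.1 hc
  · intro hcb
    -- complete the count of `a`'s with a block of `a`'s after `c`
    refine ⟨c :: replicate (-1 - p - [c].count a).val a, ⟨?_, ?_⟩, mem_cons_self⟩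
    · simp [mem_replicate, hcb.symm, hab.symm]
    · rw [← singleton_append, count_append, count_replicate_self, Nat.cast_add,
        ZMod.natCast_zmod_val]
      ring

lemma quotientSet_counterLang [NeZero m] (hab : a ≠ b) :
    quotientSet (counterLang m a b p) = Set.range (counterLang m a b) := by
  ext K
  constructor
  · rintro ⟨w, hw, rfl⟩
    have hbw : b ∉ w := fun hb => by simpa [alphabetOf_counterLang hab] using hw b hb
    exact ⟨_, (leftQuotient_counterLang hbw).symm⟩
  · rintro ⟨q, rfl⟩
    refine ⟨replicate (q - p).val a, fun c hc => ?_, ?_⟩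
    · rw [alphabetOf_counterLang hab, (mem_replicate.1 hc).2]
      exact hab
    · rw [leftQuotient_counterLang (by simp [mem_replicate, hab.symm]), count_replicate_self,
        ZMod.natCast_zmod_val, add_sub_cancel]

lemma hasComplexity_counterLang [NeZero m] (hab : a ≠ b) :
    HasComplexity (counterLang m a b p) m := by
  rw [HasComplexity, quotientSet_counterLang hab]
  refine ⟨Set.finite_range _, ?_⟩
  rw [← Set.image_univ, Set.ncard_image_of_injective _ (counterLang_injective hab),
    Set.ncard_univ, Nat.card_zmod]

end Counter

section Product

variable {m n : ℕ}

def leftCounter (m : ℕ) (w : List (Fin 4)) : Option (ZMod m) :=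
  if 3 ∈ w then none else some (w.count 0)

/-- The values of the `1`-counter modulo `n`, started at each position of `w` where a word of
`K` ends and stopped at the end of `w`; a `2` kills the counter. -/
def rightCounters (n : ℕ) (K : Language (Fin 4)) (w : List (Fin 4)) : Set (ZMod n) :=
  {q | ∃ u v, w = u ++ v ∧ u ∈ K ∧ 2 ∉ v ∧ (v.count 1 : ZMod n) = q}

def stateLang (m n : ℕ) (s : Option (ZMod m) × Set (ZMod n)) : Language (Fin 4) :=
  s.1.elim 0 (counterLang m 0 3) * counterLang n 1 2 0 + ⨆ q ∈ s.2, counterLang n 1 2 q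

def validStates (m n : ℕ) : Set (Option (ZMod m) × Set (ZMod n)) :=
  {s | s.1 = some (-1) → 0 ∈ s.2}

lemma mem_stateLang {s : Option (ZMod m) × Set (ZMod n)} {x : List (Fin 4)} :
    x ∈ stateLang m n s ↔
      x ∈ s.1.elim 0 (counterLang m 0 3) * counterLang n 1 2 0 ∨
        ∃ q ∈ s.2, x ∈ counterLang n 1 2 q := by
  simp only [stateLang, Language.mem_add, Language.mem_iSup, exists_prop]

lemma leftQuotient_counterLang_eq_elim (w : List (Fin 4)) :
    leftQuotient (counterLang m 0 3 0) w = (leftCounter m w).elim 0 (counterLang m 0 3) := by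
  unfold leftCounter
  split_ifs with h
  · exact leftQuotient_counterLang_of_mem h
  · rw [leftQuotient_counterLang h, zero_add]
    rfl

lemma leftQuotient_mul_eq_stateLang (w : List (Fin 4)) :
    leftQuotient (counterLang m 0 3 0 * counterLang n 1 2 0) w =
      stateLang m n (leftCounter m w, rightCounters n (counterLang m 0 3 0) w) := by
  ext x
  rw [mem_leftQuotient_mul, leftQuotient_counterLang_eq_elim, mem_stateLang]
  refine or_congr Iff.rfl ⟨?_, ?_⟩
  · rintro ⟨u, v, rfl, hu, hvx⟩
    have hv : 2 ∉ v := fun h => hvx.1 (mem_append_left _ h)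
    refine ⟨_, ⟨u, v, rfl, hu, hv, rfl⟩, ?_⟩
    rwa [← mem_leftQuotient, leftQuotient_counterLang hv, zero_add] at hvx
  · rintro ⟨_, ⟨u, v, rfl, hu, hv, rfl⟩, hx⟩
    refine ⟨u, v, rfl, hu, ?_⟩
    rwa [← mem_leftQuotient, leftQuotient_counterLang hv, zero_add]

lemma leftCounter_rightCounters_mem_validStates (w : List (Fin 4)) :
    (leftCounter m w, rightCounters n (counterLang m 0 3 0) w) ∈ validStates m n := by
  intro h
  simp only [leftCounter] at h
  split_ifs at h with h3
  refine ⟨w, [], (append_nil w).symm, ⟨h3, ?_⟩, not_mem_nil, by simp⟩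
  rw [zero_add]
  exact Option.some.inj h

lemma rightCounters_append (K : Language (Fin 4)) (w : List (Fin 4)) {z : List (Fin 4)}
    (hz : 2 ∉ z) :
    rightCounters n K (w ++ z) =
      (· + (z.count 1 : ZMod n)) '' rightCounters n K w ∪
        rightCounters n (leftQuotient K w) z := by
  ext q
  simp only [rightCounters, Set.mem_union, Set.mem_image, Set.mem_ofPred_eq]
  constructor
  · rintro ⟨u, v, huv, hu, hv, rfl⟩
    rcases append_eq_append_iff.1 huv with ⟨c, rfl, rfl⟩ | ⟨c, rfl, rfl⟩
    · exact Or.inr ⟨c, v, rfl, hu, hv, rfl⟩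
    · refine Or.inl ⟨_, ⟨u, c, rfl, hu, fun h => hv (mem_append_left _ h), rfl⟩, ?_⟩
      rw [count_append, Nat.cast_add]
  · rintro (⟨_, ⟨u, v, rfl, hu, hv, rfl⟩, rfl⟩ | ⟨u, v, rfl, hu, hv, rfl⟩)
    · refine ⟨u, v ++ z, append_assoc _ _ _, hu, by simp [hv, hz], ?_⟩
      rw [count_append, Nat.cast_add]
    · exact ⟨w ++ u, v, (append_assoc _ _ _).symm, hu, hv, rfl⟩

lemma rightCounters_counterLang_eq_empty {p : ZMod m} (hp : p ≠ -1) {z : List (Fin 4)}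
    (hz : 0 ∉ z) : rightCounters n (counterLang m 0 3 p) z = ∅ := by
  refine Set.eq_empty_of_forall_notMem ?_
  rintro _ ⟨u, v, rfl, hu, -, -⟩
  have hu0 : u.count 0 = 0 := count_eq_zero.2 fun h => hz (mem_append_left _ h)
  exact hp (by simpa [hu0] using hu.2)

lemma rightCounters_replicate_zero (t : ℕ) :
    rightCounters n (counterLang m 0 3 0) (replicate t 0) =
      {q | q = 0 ∧ ∃ j ≤ t, (j : ZMod m) = -1} := by
  ext q
  simp only [rightCounters, Set.mem_ofPred_eq]
  constructor
  · rintro ⟨u, v, huv, hu, -, rfl⟩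
    obtain ⟨hlen, hu', hv'⟩ := append_eq_replicate_iff.1 huv.symm
    rw [hu', replicate_mem_counterLang (by decide), zero_add] at hu
    rw [hv']
    exact ⟨by simp [count_replicate], u.length, by omega, hu⟩
  · rintro ⟨rfl, j, hj, hjm⟩
    refine ⟨replicate j 0, replicate (t - j) 0, ?_, ?_, by simp [mem_replicate],
      by simp [count_replicate]⟩
    · rw [← replicate_add, Nat.add_sub_cancel' hj]
    · rwa [replicate_mem_counterLang (by decide), zero_add]

/-- A full turn `0 ^ m` of the `0`-counter passes `-1` once, which adds the value `0`; a block of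
`1`s then shifts every value. -/
lemma rightCounters_append_zeros_ones (hm : 2 ≤ m) [NeZero m] {w : List (Fin 4)} (h3 : 3 ∉ w)
    (h0 : (w.count 0 : ZMod m) = 0) (t : ℕ) :
    rightCounters n (counterLang m 0 3 0) (w ++ replicate m 0 ++ replicate t 1) =
      (· + (t : ZMod n)) '' insert 0 (rightCounters n (counterLang m 0 3 0) w) := by
  have h3' : 3 ∉ w ++ replicate m 0 := by simp [h3, mem_replicate]
  have h0' : ((w ++ replicate m 0).count 0 : ZMod m) = 0 := by simp [count_append, h0]
  have hturn : {q : ZMod n | q = 0 ∧ ∃ j ≤ m, (j : ZMod m) = -1} = {0} := by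
    have : ∃ j ≤ m, (j : ZMod m) = -1 :=
      ⟨(-1 : ZMod m).val, (ZMod.val_lt _).le, ZMod.natCast_zmod_val _⟩
    simp [this]
  rw [rightCounters_append _ _ (by simp [mem_replicate]),
    rightCounters_append _ _ (by simp [mem_replicate]), leftQuotient_counterLang h3, h0, zero_add,
    rightCounters_replicate_zero, hturn, leftQuotient_counterLang h3', h0', zero_add,
    rightCounters_counterLang_eq_empty (z := replicate t 1) (ZMod.zero_ne_neg_one hm)
      (by simp [mem_replicate]), count_replicate_self,
    count_eq_zero_of_not_mem (by simp [mem_replicate] : (1 : Fin 4) ∉ replicate m 0),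
    Nat.cast_zero, Set.union_empty, Set.union_singleton]
  simp only [add_zero, Set.image_id']

lemma exists_rightCounters_eq (hm : 2 ≤ m) [NeZero n] (S : Set (ZMod n)) :
    ∃ w : List (Fin 4), 3 ∉ w ∧ (w.count 0 : ZMod m) = 0 ∧
      rightCounters n (counterLang m 0 3 0) w = S := by
  have : NeZero m := ⟨by omega⟩
  suffices h : ∀ c : ZMod n, ∃ w : List (Fin 4), 3 ∉ w ∧ (w.count 0 : ZMod m) = 0 ∧
      rightCounters n (counterLang m 0 3 0) w = (· + c) '' S by
    simpa using h 0
  induction S, S.toFinite using Set.Finite.induction_on with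
  | empty =>
    intro c
    refine ⟨[], not_mem_nil, by simp, ?_⟩
    simpa using rightCounters_counterLang_eq_empty (n := n) (ZMod.zero_ne_neg_one hm) not_mem_nil
  | @insert s T _ _ ih =>
    intro c
    obtain ⟨w, h3, h0, hw⟩ := ih (-s)
    refine ⟨w ++ replicate m 0 ++ replicate (s + c).val 1, by simp [h3, mem_replicate],
      by simp [count_append, count_replicate, h0], ?_⟩
    rw [rightCounters_append_zeros_ones hm h3 h0, hw, ZMod.natCast_zmod_val, Set.image_insert_eq,
      Set.image_insert_eq, Set.image_image, zero_add]
    congr 2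
    funext x
    ring

lemma exists_word_of_mem_validStates (hm : 2 ≤ m) [NeZero n]
    {s : Option (ZMod m) × Set (ZMod n)} (hs : s ∈ validStates m n) :
    ∃ w, (leftCounter m w, rightCounters n (counterLang m 0 3 0) w) = s := by
  have : NeZero m := ⟨by omega⟩
  obtain ⟨po, S⟩ := s
  obtain ⟨w, h3, h0, hw⟩ := exists_rightCounters_eq hm S
  cases po with
  | none =>
    refine ⟨w ++ [3], ?_⟩
    rw [leftCounter, if_pos (mem_append_right _ (mem_singleton_self _)),
      rightCounters_append _ _ (by decide), hw, leftQuotient_counterLang h3, h0, zero_add,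
      rightCounters_counterLang_eq_empty (ZMod.zero_ne_neg_one hm) (by decide)]
    simp
  | some p =>
    refine ⟨w ++ replicate p.val 0, ?_⟩
    have h3' : 3 ∉ w ++ replicate p.val 0 := by simp [h3, mem_replicate]
    have h0' : ((w ++ replicate p.val 0).count 0 : ZMod m) = p := by
      rw [count_append, count_replicate_self, Nat.cast_add, h0, ZMod.natCast_zmod_val, zero_add]
    have h1 : (replicate p.val (0 : Fin 4)).count 1 = 0 := by simp [count_replicate]
    rw [leftCounter, if_neg h3', h0', rightCounters_append _ _ (by simp [mem_replicate]), hw,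
      leftQuotient_counterLang h3, h0, zero_add, rightCounters_replicate_zero, h1, Nat.cast_zero]
    simp only [add_zero, Set.image_id', Prod.mk.injEq, Set.union_eq_left, true_and]
    rintro q ⟨rfl, j, hj, hj1⟩
    exact hs (congrArg some (ZMod.eq_neg_one_of_natCast_eq_neg_one hj hj1))

lemma mem_stateLang_iff_fst_eq [NeZero m] [NeZero n] (p : ZMod m)
    (s : Option (ZMod m) × Set (ZMod n)) :
    replicate (-1 - p).val 0 ++ 2 :: replicate (-1 : ZMod n).val 1 ∈ stateLang m n s ↔
      s.1 = some p := by
  have hB : replicate (-1 : ZMod n).val (1 : Fin 4) ∈ counterLang n 1 2 0 := by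
    rw [replicate_mem_counterLang (by decide), ZMod.natCast_zmod_val, zero_add]
  rw [mem_stateLang]
  rcases s with ⟨_ | p', S⟩
  · simp [mem_counterLang]
  constructor
  · rintro (hx | ⟨q, -, hx⟩)
    · obtain ⟨u, hu, v, hv, huv⟩ := Language.mem_mul.1 hx
      -- the `2` cannot lie in the `L`-factor, so all the `0`s lie in the `L'`-factor
      have hv0 : v.count 0 = 0 := count_eq_zero.2 fun h => by
        simpa [mem_replicate] using (suffix_of_append_eq_append_cons huv hv.1).subset h
      have hu0 : u.count 0 = (-1 - p).val := by
        simpa [hv0, count_replicate] using congrArg (count 0) huv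
      have hp' := hu.2
      rw [hu0, ZMod.natCast_zmod_val] at hp'
      simp only [Option.some.injEq]
      linear_combination hp'
    · simp [mem_counterLang] at hx
  · rintro ⟨⟩
    refine Or.inl (Language.mem_mul.2 ⟨_, ⟨?_, ?_⟩, _, hB, (append_cons _ _ _).symm⟩)
    · simp [mem_replicate]
    · simp

lemma cons_three_mem_stateLang_iff [NeZero n] (q : ZMod n) (s : Option (ZMod m) × Set (ZMod n)) :
    3 :: replicate (-1 - q).val 1 ∈ stateLang m n s ↔ s.1 = some (-1) ∧ q = 0 ∨ q ∈ s.2 := by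
  have h2 : (2 : Fin 4) ∉ 3 :: replicate (-1 - q).val 1 := by simp [mem_replicate]
  have h1 : (((3 : Fin 4) :: replicate (-1 - q).val 1).count 1 : ZMod n) = -1 - q := by
    simp
  have hR (q' : ZMod n) :
      (3 : Fin 4) :: replicate (-1 - q).val 1 ∈ counterLang n 1 2 q' ↔ q' = q := by
    rw [mem_counterLang, h1]
    exact ⟨fun h => by linear_combination h.2, fun h => ⟨h2, by rw [h]; ring⟩⟩
  rw [mem_stateLang]
  rcases s with ⟨_ | p', S⟩
  · simp [hR]
  refine or_congr ⟨fun hx => ?_, ?_⟩ (by simp [hR])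
  · obtain ⟨_ | ⟨c, u⟩, hu, v, hv, huv⟩ := Language.mem_mul.1 hx
    · rw [nil_append] at huv
      subst huv
      have hp' : p' + 0 = -1 := by simpa using hu.2
      exact ⟨by simpa using hp', ((hR 0).1 hv).symm⟩
    · simp only [cons_append, cons.injEq] at huv
      exact absurd (huv.1 ▸ mem_cons_self) hu.1
  · rintro ⟨hp', rfl⟩
    simp only [Option.some.injEq] at hp'
    subst hp'
    exact Language.mem_mul.2 ⟨[], by simp [mem_counterLang], _, (hR 0).2 rfl, rfl⟩

lemma stateLang_injOn [NeZero m] [NeZero n] : Set.InjOn (stateLang m n) (validStates m n) := by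
  rintro ⟨po, S⟩ hs ⟨po', S'⟩ hs' h
  have hprobe {s : Option (ZMod m) × Set (ZMod n)} (hs : s ∈ validStates m n) (q : ZMod n) :
      3 :: replicate (-1 - q).val 1 ∈ stateLang m n s ↔ q ∈ s.2 := by
    rw [cons_three_mem_stateLang_iff]
    exact ⟨by rintro (⟨h1, rfl⟩ | h); exacts [hs h1, h], Or.inr⟩
  refine Prod.ext (Option.ext fun p => ?_) (Set.ext fun q => ?_)
  · rw [← mem_stateLang_iff_fst_eq p (po, S), ← mem_stateLang_iff_fst_eq p (po', S'), h]
  · rw [← hprobe hs q, ← hprobe hs' q, h]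

lemma ncard_validStates [NeZero m] [NeZero n] :
    (validStates m n).ncard = m * 2 ^ n + 2 ^ (n - 1) := by
  have hcompl : (validStates m n)ᶜ = {some (-1)} ×ˢ 𝒫 {0}ᶜ := by
    ext ⟨po, S⟩
    simp [validStates, Set.subset_compl_singleton_iff]
  have hstates : Nat.card (Option (ZMod m) × Set (ZMod n)) = (m + 1) * 2 ^ n := by
    simp [Nat.card_eq_fintype_card, Fintype.card_set, ZMod.card]
  have hzero : ({0}ᶜ : Set (ZMod n)).ncard = n - 1 := by
    rw [Set.ncard_compl, Set.ncard_singleton, Nat.card_zmod]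
  have h := Set.ncard_add_ncard_compl (validStates m n)
  rw [hcompl, Set.ncard_prod, Set.ncard_singleton, Set.ncard_powerset, hzero, hstates] at h
  obtain ⟨k, rfl⟩ := Nat.exists_eq_succ_of_ne_zero (NeZero.ne n)
  rw [Nat.succ_sub_one, pow_succ] at h ⊢
  linarith

lemma alphabetOf_mul_eq_univ [NeZero m] [NeZero n] :
    alphabetOf (counterLang m (0 : Fin 4) 3 0 * counterLang n 1 2 0) = Set.univ := by
  rw [alphabetOf_mul ⟨_, replicate_val_mem_counterLang (by decide)⟩
    ⟨_, replicate_val_mem_counterLang (by decide)⟩, alphabetOf_counterLang (by decide),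
    alphabetOf_counterLang (by decide)]
  ext c
  fin_cases c <;> simp

lemma quotientSet_mul_eq_image (hm : 2 ≤ m) [NeZero n] :
    quotientSet (counterLang m (0 : Fin 4) 3 0 * counterLang n 1 2 0) =
      stateLang m n '' validStates m n := by
  have : NeZero m := ⟨by omega⟩
  ext K
  simp only [quotientSet, alphabetOf_mul_eq_univ, Set.mem_univ, implies_true, true_and,
    Set.mem_ofPred_eq, Set.mem_image]
  constructor
  · rintro ⟨w, rfl⟩
    exact ⟨_, leftCounter_rightCounters_mem_validStates w,
      (leftQuotient_mul_eq_stateLang w).symm⟩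
  · rintro ⟨s, hs, rfl⟩
    obtain ⟨w, rfl⟩ := exists_word_of_mem_validStates hm hs
    exact ⟨w, (leftQuotient_mul_eq_stateLang w).symm⟩

theorem hasComplexity_mul (hm : 2 ≤ m) [NeZero n] :
    HasComplexity (counterLang m (0 : Fin 4) 3 0 * counterLang n 1 2 0)
      (m * 2 ^ n + 2 ^ (n - 1)) := by
  have : NeZero m := ⟨by omega⟩
  rw [HasComplexity, quotientSet_mul_eq_image hm, stateLang_injOn.ncard_image,
    ncard_validStates]
  exact ⟨(Set.toFinite _).image _, rfl⟩

end Product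

/-- the bound `m·2^n + 2^(n-1)` for product is tight, with witnesses over
three-letter alphabets sharing exactly two letters. -/
theorem product_tight (m n : ℕ) (hm : 3 ≤ m) (hn : 3 ≤ n) :
    ∃ L' L : Language (Fin 4),
      (alphabetOf L').ncard = 3 ∧ (alphabetOf L).ncard = 3 ∧
      (alphabetOf L' ∩ alphabetOf L).ncard = 2 ∧
      (alphabetOf L' \ alphabetOf L).Nonempty ∧
      (alphabetOf L \ alphabetOf L').Nonempty ∧
      HasComplexity L' m ∧ HasComplexity L n ∧
      HasComplexity (L' * L) (m * 2 ^ n + 2 ^ (n - 1)) := by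
  have : NeZero m := ⟨by omega⟩
  have : NeZero n := ⟨by omega⟩
  refine ⟨counterLang m 0 3 0, counterLang n 1 2 0, ?_⟩
  rw [alphabetOf_counterLang (by decide), alphabetOf_counterLang (by decide)]
  refine ⟨?_, ?_, ?_, ⟨2, by decide⟩, ⟨3, by decide⟩, hasComplexity_counterLang (by decide),
    hasComplexity_counterLang (by decide), hasComplexity_mul (by omega)⟩
  all_goals simp only [Set.ncard_eq_toFinset_card']
  all_goals decide
end

section
/- Let m, n ≥ 3 and let L' and L be regular languages (over possibly different alphabets) with quotient complexities m and n respectively. Then κ(L' \ L) ≤ m·n + m, where L' \ L is set difference. -/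
/-
A left quotient of `L' \ L` is `w⁻¹L' \ w⁻¹L`. If `w` is a word over `Σ_L`, this is one of at most
`m * n` differences of quotients of `L'` and `L`; otherwise `w` contains a letter outside `Σ_L`, so
`w⁻¹L = ∅` and the quotient is one of the `m` quotients `w⁻¹L'`. In both cases `w` is a word over
`Σ_{L'}`, since `Σ_{L' \ L} ⊆ Σ_{L'}`.
-/

theorem alphabetOf_sdiff_subset {α : Type*} (L' L : Language α) :
    alphabetOf (L' \ L) ⊆ alphabetOf L' :=
  fun _ ⟨u, v, h⟩ => ⟨u, v, h.1⟩

theorem leftQuotient_sdiff {α : Type*} (L' L : Language α) (w : List α) :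
    leftQuotient (L' \ L) w = leftQuotient L' w \ leftQuotient L w :=
  rfl

theorem leftQuotient_eq_zero_of_notMem_alphabetOf {α : Type*} {L : Language α} {w : List α}
    {a : α} (haw : a ∈ w) (ha : a ∉ alphabetOf L) : leftQuotient L w = 0 := by
  obtain ⟨s, t, rfl⟩ := List.append_of_mem haw
  refine Set.eq_empty_of_forall_notMem fun x hx => ha ⟨s, t ++ x, ?_⟩
  simpa [leftQuotient] using hx

theorem quotientSet_sdiff_subset {α : Type*} (L' L : Language α) :
    quotientSet (L' \ L) ⊆
      Set.image2 (· \ ·) (quotientSet L') (quotientSet L) ∪ quotientSet L' := by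
  rintro _ ⟨w, hw, rfl⟩
  have hw' : ∀ a ∈ w, a ∈ alphabetOf L' := fun a ha => alphabetOf_sdiff_subset L' L (hw a ha)
  rw [leftQuotient_sdiff]
  by_cases hwL : ∀ a ∈ w, a ∈ alphabetOf L
  · exact Or.inl ⟨_, ⟨w, hw', rfl⟩, _, ⟨w, hwL, rfl⟩, rfl⟩
  · obtain ⟨a, haw, ha⟩ := not_forall₂.mp hwL
    rw [leftQuotient_eq_zero_of_notMem_alphabetOf haw ha]
    exact Or.inr ⟨w, hw', Set.sdiff_empty⟩

theorem Set.ncard_image2_le {α β γ : Type*} (f : α → β → γ) {s : Set α} {t : Set β}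
    (hs : s.Finite) (ht : t.Finite) : (Set.image2 f s t).ncard ≤ s.ncard * t.ncard := by
  rw [← Set.image_uncurry_prod, ← Set.ncard_prod]
  exact Set.ncard_image_le (hs.prod ht)

theorem difference_upper_bound_general {α : Type*} (m n : ℕ)
    (L' L : Language α) (hL' : HasComplexity L' m) (hL : HasComplexity L n) :
    (quotientSet (L' \ L)).Finite ∧
      (quotientSet (L' \ L)).ncard ≤ m * n + m := by
  obtain ⟨hfin', rfl⟩ := hL'
  obtain ⟨hfin, rfl⟩ := hL
  have hbound := (hfin'.image2 (· \ ·) hfin).union hfin'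
  refine ⟨hbound.subset (quotientSet_sdiff_subset L' L), ?_⟩
  calc (quotientSet (L' \ L)).ncard
      ≤ (Set.image2 (· \ ·) (quotientSet L') (quotientSet L) ∪ quotientSet L').ncard :=
        Set.ncard_le_ncard (quotientSet_sdiff_subset L' L) hbound
    _ ≤ (Set.image2 (· \ ·) (quotientSet L') (quotientSet L)).ncard + (quotientSet L').ncard :=
        Set.ncard_union_le _ _
    _ ≤ (quotientSet L').ncard * (quotientSet L).ncard + (quotientSet L').ncard := by
        gcongr
        exact Set.ncard_image2_le _ hfin' hfin

/-- unrestricted upper bound for difference. -/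
theorem difference_upper_bound {α : Type*} (m n : ℕ) (hm : 3 ≤ m) (hn : 3 ≤ n)
    (L' L : Language α) (hL' : HasComplexity L' m) (hL : HasComplexity L n) :
    (quotientSet (L' \ L)).Finite ∧
      (quotientSet (L' \ L)).ncard ≤ m * n + m :=
  difference_upper_bound_general m n L' L hL' hL
end

section
/- Let m, n ≥ 3. If L' and L are right ideals (over possibly different alphabets) with quotient complexities m and n respectively, then κ(L'·L) ≤ m + 2^(n-2) + 2^(n-1) + 1. Moreover, for all m, n ≥ 3 there exist right ideals L' and L, with four-letter alphabets Σ_{L'} and Σ_L satisfying Σ_{L'} \ Σ_L ≠ ∅ and Σ_L \ Σ_{L'} ≠ ∅, of complexities m and n, such that κ(L'·L) = m + 2^(n-2) + 2^(n-1) + 1. -/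
/-!
Upper bound. Let `F' = Σ_{L'}^*`, `F = Σ_L^*` and `Q` the quotients of `L`. Splitting `w` at its
prefixes `u ∈ L'` gives `w⁻¹(L'L) = (w⁻¹L')L ∪ ⋃ {v⁻¹L | w = uv, u ∈ L', v ∈ F}`. As `L'` is a right
ideal there are three cases. If `w ∈ F' \ L'`, no prefix of `w` is in `L'` and the quotient is `q L`
for one of the `m - 1` quotients `q ≠ F'` of `L'`. If `w ∈ L'`, the quotient is `F'L ∪ ⋃ T` for some
`T ⊆ Q \ {L}` (as `L ⊆ F'L`), which is `F'L ∪ F` when `F ∈ T`: at most `2 ^ (n - 2) + 1` choices.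
If `w ∉ F'`, the quotient is `⋃ T` with `T ⊆ Q`, at most `2 ^ (n - 1) + 1` choices.

Witness. `L'` is the set of words over `{0, 1, 2, 3}` with at least `m - 1` zeros, and `L` is
accepted by a DFA over `{1, 2, 3, 4}` whose states `0, …, n - 2` form a cycle under `1`; the letter
`2` acts like `1` except that it fixes `0`. After `0 ^ (m - 1)` each further letter `a` moves the
set of active states of `L` and adds `δ(0, a)`, which is `1` for `a = 1` and `0` (whose language
`Σ_{L'}^* L` already contains) for `a = 2`; so `1` and `2` act as a shift register writing every
subset of `{1, …, n - 2}`. The letter `3` leads `n - 2` to the accepting sink, `4` leaves `L'` for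
good while fixing all states, and the words `probe n i` separate the states.
-/

open Set

theorem Language.mem_sSup {α : Type*} {T : Set (Language α)} {x : List α} :
    x ∈ sSup T ↔ ∃ K ∈ T, x ∈ K :=
  Set.mem_sUnion

section Quotients

variable {α : Type*} {A B L L' : Language α} {w x : List α} {a : α} {n : ℕ}

lemma leftQuotient_append (L : Language α) (u v : List α) :
    leftQuotient L (u ++ v) = leftQuotient (leftQuotient L u) v :=
  Language.leftQuotient_append L u v

lemma leftQuotient_add (A B : Language α) (w : List α) :
    leftQuotient (A + B) w = leftQuotient A w + leftQuotient B w :=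
  rfl

lemma mem_alphabetOf_of_mem (hw : w ∈ L) (ha : a ∈ w) : a ∈ alphabetOf L := by
  obtain ⟨s, t, rfl⟩ := List.append_of_mem ha
  exact ⟨s, t, by simpa using hw⟩

lemma mem_starOf_of_mem (hw : w ∈ L) : w ∈ starOf (alphabetOf L) :=
  fun _ ha => mem_alphabetOf_of_mem hw ha

lemma nil_mem_starOf (S : Set α) : [] ∈ starOf S :=
  fun _ h => nomatch h

lemma leftQuotient_le_starOf (L : Language α) (w : List α) :
    leftQuotient L w ≤ starOf (alphabetOf L) :=
  fun _ hx _ ha => mem_alphabetOf_of_mem hx (List.mem_append_right w ha)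

lemma leftQuotient_eq_zero (hw : w ∉ starOf (alphabetOf L)) : leftQuotient L w = 0 :=
  le_bot_iff.mp fun x hx => hw fun _ ha => mem_alphabetOf_of_mem hx (List.mem_append_left x ha)

lemma self_mem_quotientSet (L : Language α) : L ∈ quotientSet L :=
  ⟨[], by simp, rfl⟩

lemma leftQuotient_mem_quotientSet (hL : alphabetOf L = univ) {K : Language α}
    (hK : K ∈ quotientSet L) (u : List α) : leftQuotient K u ∈ quotientSet L := by
  obtain ⟨w, -, rfl⟩ := hK
  exact ⟨w ++ u, fun a _ => hL ▸ mem_univ a, (leftQuotient_append L w u).symm⟩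

lemma union_subset_alphabetOf_mul (hA : ∃ u, u ∈ A) (hB : ∃ v, v ∈ B) :
    alphabetOf A ∪ alphabetOf B ⊆ alphabetOf (A * B) := by
  obtain ⟨u, hu⟩ := hA
  obtain ⟨v, hv⟩ := hB
  rintro a (⟨s, t, hst⟩ | ⟨s, t, hst⟩)
  · exact ⟨s, t ++ v, by simpa using Language.append_mem_mul hst hv⟩
  · exact ⟨u ++ s, t, by simpa using Language.append_mem_mul hu hst⟩

theorem IsRightIdeal.append_mem (hL : IsRightIdeal L) (hw : w ∈ L)
    (hx : x ∈ starOf (alphabetOf L)) : w ++ x ∈ L := by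
  have := Language.append_mem_mul hw hx
  rwa [hL.2] at this

theorem IsRightIdeal.leftQuotient_eq_starOf (hL : IsRightIdeal L) (hw : w ∈ L) :
    leftQuotient L w = starOf (alphabetOf L) :=
  le_antisymm (leftQuotient_le_starOf L w) fun _ hx => hL.append_mem hw hx

theorem IsRightIdeal.starOf_mem_quotientSet (hL : IsRightIdeal L) :
    starOf (alphabetOf L) ∈ quotientSet L := by
  obtain ⟨w, hw⟩ := hL.1
  exact ⟨w, mem_starOf_of_mem hw, (hL.leftQuotient_eq_starOf hw).symm⟩

theorem IsRightIdeal.ne_starOf (hL : IsRightIdeal L) (hC : HasComplexity L n) (hn : 2 ≤ n) :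
    L ≠ starOf (alphabetOf L) := by
  intro h
  have hsub : quotientSet L ⊆ {L} := by
    rintro _ ⟨w, hw, rfl⟩
    have hwL : w ∈ L := by rw [h]; exact hw
    rw [hL.leftQuotient_eq_starOf hwL, ← h, mem_singleton_iff]
  have := ncard_le_ncard hsub
  rw [hC.2, ncard_singleton] at this
  omega

lemma isRightIdeal_of_append_singleton_mem (hne : ∃ w, w ∈ L)
    (h : ∀ w ∈ L, ∀ a ∈ alphabetOf L, w ++ [a] ∈ L) : IsRightIdeal L := by
  refine ⟨hne, le_antisymm ?_ fun w hw => ⟨w, hw, [], nil_mem_starOf _, List.append_nil w⟩⟩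
  intro y hy
  obtain ⟨w, hw, x, hx, rfl⟩ := Language.mem_mul.mp hy
  clear hy
  induction x using List.reverseRecOn with
  | nil => simpa
  | append_singleton x a ih =>
    rw [← List.append_assoc]
    exact h _ (ih fun b hb => hx b (by simp [hb])) a (hx a (by simp))

def splitQuotients (L' L : Language α) (w : List α) : Set (Language α) :=
  {K | ∃ u ∈ L', ∃ v ∈ starOf (alphabetOf L), u ++ v = w ∧ K = leftQuotient L v}

lemma splitQuotients_subset_quotientSet : splitQuotients L' L w ⊆ quotientSet L := by
  rintro _ ⟨u, -, v, hv, -, rfl⟩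
  exact ⟨v, hv, rfl⟩

lemma leftQuotient_mul (L' L : Language α) (w : List α) :
    leftQuotient (L' * L) w = leftQuotient L' w * L + sSup (splitQuotients L' L w) := by
  ext x
  simp only [Language.mem_add, Language.mem_sSup, Language.mem_mul]
  constructor
  · rintro ⟨p, hp, q, hq, hpq⟩
    rcases List.append_eq_append_iff.mp hpq with ⟨c, rfl, rfl⟩ | ⟨c, rfl, rfl⟩
    · exact Or.inr ⟨_, ⟨p, hp, c, fun a ha => mem_alphabetOf_of_mem hq
        (List.mem_append_left x ha), rfl, rfl⟩, hq⟩
    · exact Or.inl ⟨c, hp, q, hq, rfl⟩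
  · rintro (⟨c, hc, q, hq, rfl⟩ | ⟨_, ⟨u, hu, v, -, rfl, rfl⟩, hx⟩)
    · exact ⟨w ++ c, hc, q, hq, by simp⟩
    · exact ⟨u, hu, v ++ x, hx, by simp⟩

lemma leftQuotient_mul_of_notMem_starOf (hw : w ∉ starOf (alphabetOf L')) :
    leftQuotient (L' * L) w = sSup (splitQuotients L' L w) := by
  rw [leftQuotient_mul, leftQuotient_eq_zero hw, zero_mul, zero_add]

theorem IsRightIdeal.leftQuotient_mul_of_notMem (hL' : IsRightIdeal L')
    (hw : w ∈ starOf (alphabetOf L')) (hw' : w ∉ L') :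
    leftQuotient (L' * L) w = leftQuotient L' w * L := by
  have hempty : splitQuotients L' L w = ∅ := by
    refine eq_empty_of_forall_notMem ?_
    rintro _ ⟨u, hu, v, -, rfl, -⟩
    exact hw' (hL'.append_mem hu fun a ha => hw a (List.mem_append_right u ha))
  rw [leftQuotient_mul, hempty, sSup_empty]
  exact add_zero _

theorem IsRightIdeal.leftQuotient_mul_of_mem (hL' : IsRightIdeal L') (hw : w ∈ L') :
    leftQuotient (L' * L) w =
      starOf (alphabetOf L') * L + sSup (splitQuotients L' L w \ {L}) := by
  have hsplit : L ∈ splitQuotients L' L w :=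
    ⟨w, hw, [], nil_mem_starOf _, List.append_nil w, rfl⟩
  have hle : L ≤ starOf (alphabetOf L') * L := fun x hx => ⟨[], nil_mem_starOf _, x, hx, rfl⟩
  have hsSup : sSup (splitQuotients L' L w) = L ⊔ sSup (splitQuotients L' L w \ {L}) := by
    rw [← sSup_insert, insert_sdiff_self_of_mem hsplit]
  rw [leftQuotient_mul, hL'.leftQuotient_eq_starOf hw, hsSup]
  exact (sup_assoc _ _ _).symm.trans (congrArg (· ⊔ _) (sup_eq_left.mpr hle))

lemma mem_leftQuotient_mul_singleton :
    x ∈ leftQuotient (A * B) [a] ↔ x ∈ leftQuotient A [a] * B ∨ ([] ∈ A ∧ a :: x ∈ B) := by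
  simp only [Language.mem_mul]
  show (∃ u ∈ A, ∃ v ∈ B, u ++ v = a :: x) ↔ _
  constructor
  · rintro ⟨u, hu, v, hv, huv⟩
    rcases List.append_eq_cons_iff.mp huv with ⟨rfl, rfl⟩ | ⟨u', rfl, rfl⟩
    · exact Or.inr ⟨hu, hv⟩
    · exact Or.inl ⟨u', hu, v, hv, rfl⟩
  · rintro (⟨u, hu, v, hv, rfl⟩ | ⟨hA, hB⟩)
    · exact ⟨a :: u, hu, v, hv, rfl⟩
    · exact ⟨[], hA, a :: x, hB, rfl⟩

lemma leftQuotient_mul_singleton_of_nil_mem (h : [] ∈ A) :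
    leftQuotient (A * B) [a] = leftQuotient A [a] * B + leftQuotient B [a] := by
  ext x
  rw [mem_leftQuotient_mul_singleton, Language.mem_add]
  exact or_congr_right (and_iff_right h)

lemma leftQuotient_mul_singleton_of_nil_notMem (h : [] ∉ A) :
    leftQuotient (A * B) [a] = leftQuotient A [a] * B := by
  ext x
  rw [mem_leftQuotient_mul_singleton]
  exact or_iff_left fun h' => h h'.1

lemma cons_mem_mul_iff (hA : ∀ u ∈ A, a ∉ u) :
    a :: x ∈ A * B ↔ [] ∈ A ∧ a :: x ∈ B := by
  refine (mem_leftQuotient_mul_singleton (x := x)).trans (or_iff_right ?_)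
  rintro ⟨u, hu, -, -, -⟩
  exact hA _ hu (List.mem_cons_self ..)

lemma leftQuotient_acceptsFrom {σ : Type*} (M : DFA α σ) (s : σ) (w : List α) :
    leftQuotient (M.acceptsFrom s) w = M.acceptsFrom (M.evalFrom s w) := by
  ext x
  simp only [DFA.mem_acceptsFrom, ← DFA.evalFrom_of_append]
  rfl

lemma leftQuotient_iSup_acceptsFrom {σ : Type*} (M : DFA α σ) (S : Set σ) (w : List α) :
    leftQuotient (⨆ s ∈ S, M.acceptsFrom s) w = ⨆ s ∈ (M.evalFrom · w) '' S, M.acceptsFrom s := by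
  rw [iSup_image]
  ext x
  show w ++ x ∈ (⨆ s ∈ S, M.acceptsFrom s) ↔ _
  simp only [Language.mem_iSup, ← leftQuotient_acceptsFrom]
  rfl

end Quotients

section Joins

variable {β : Type*}

def joinsWithTop [CompleteLattice β] (P : Set β) (t : β) : Set β :=
  insert t (sSup '' 𝒫 (P \ {t}))

lemma sSup_mem_joinsWithTop [CompleteLattice β] {P T : Set β} {t : β} (hP : ∀ K ∈ P, K ≤ t)
    (hT : T ⊆ P) : sSup T ∈ joinsWithTop P t := by
  by_cases ht : t ∈ T
  · exact Or.inl (le_antisymm (sSup_le fun K hK => hP K (hT hK)) (le_sSup ht))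
  · exact Or.inr ⟨T, fun K hK => ⟨hT hK, fun h => ht (h ▸ hK)⟩, rfl⟩

lemma joinsWithTop_finite [CompleteLattice β] {P : Set β} {t : β} (hP : P.Finite) :
    (joinsWithTop P t).Finite :=
  (hP.sdiff.powerset.image _).insert t

lemma ncard_joinsWithTop_le [CompleteLattice β] {P : Set β} {t : β} (hP : P.Finite) (ht : t ∈ P) :
    (joinsWithTop P t).ncard ≤ 2 ^ (P.ncard - 1) + 1 :=
  calc (joinsWithTop P t).ncard ≤ (sSup '' 𝒫 (P \ {t})).ncard + 1 := ncard_insert_le _ _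
    _ ≤ (𝒫 (P \ {t})).ncard + 1 := by gcongr; exact ncard_image_le hP.sdiff.powerset
    _ = 2 ^ (P.ncard - 1) + 1 := by rw [ncard_powerset _ hP.sdiff, ncard_sdiff_singleton_of_mem ht]

lemma ncard_insert_powerset {X E : Set β} (hX : X.Finite) (hE : ¬E ⊆ X) :
    (insert E (𝒫 X)).ncard = 2 ^ X.ncard + 1 := by
  rw [ncard_insert_of_notMem hE hX.powerset, ncard_powerset X hX]

lemma eq_of_mem_insert_powerset {X E S S' : Set β} {t : β} (htE : t ∈ E) (htX : t ∉ X)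
    (hS : S ∈ insert E (𝒫 X)) (hS' : S' ∈ insert E (𝒫 X)) (ht : t ∈ S ↔ t ∈ S')
    (hX : ∀ i ∈ X, (i ∈ S ∨ t ∈ S ↔ i ∈ S' ∨ t ∈ S')) : S = S' := by
  rcases hS with rfl | hS <;> rcases hS' with rfl | hS'
  · rfl
  · exact absurd (hS' (ht.mp htE)) htX
  · exact absurd (hS (ht.mpr htE)) htX
  · ext i
    by_cases hi : i ∈ X
    · have htS : t ∉ S := fun h => htX (hS h)
      have htS' : t ∉ S' := fun h => htX (hS' h)
      simpa [htS, htS'] using hX i hi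
    · exact iff_of_false (fun h => hi (hS h)) (fun h => hi (hS' h))

end Joins

section UpperBound

variable {α : Type*} {L L' : Language α} {m n : ℕ}

def quotientCandidates (L' L : Language α) : Set (Language α) :=
  (· * L) '' (quotientSet L' \ {starOf (alphabetOf L')}) ∪
    (starOf (alphabetOf L') * L + ·) '' joinsWithTop (quotientSet L \ {L}) (starOf (alphabetOf L)) ∪
    joinsWithTop (quotientSet L) (starOf (alphabetOf L))

theorem IsRightIdeal.leftQuotient_mul_mem_quotientCandidates (hL' : IsRightIdeal L')
    (L : Language α) (w : List α) : leftQuotient (L' * L) w ∈ quotientCandidates L' L := by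
  have hQ : ∀ K ∈ quotientSet L, K ≤ starOf (alphabetOf L) := by
    rintro _ ⟨v, -, rfl⟩
    exact leftQuotient_le_starOf L v
  by_cases hw : w ∈ starOf (alphabetOf L')
  · by_cases hw' : w ∈ L'
    · rw [hL'.leftQuotient_mul_of_mem hw']
      exact Or.inl (Or.inr (mem_image_of_mem _ (sSup_mem_joinsWithTop (fun K hK => hQ K hK.1)
        (sdiff_subset_sdiff_left splitQuotients_subset_quotientSet))))
    · rw [hL'.leftQuotient_mul_of_notMem hw hw']
      refine Or.inl (Or.inl (mem_image_of_mem _ ⟨⟨w, hw, rfl⟩, fun h => hw' ?_⟩))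
      have : [] ∈ leftQuotient L' w := (mem_singleton_iff.mp h) ▸ nil_mem_starOf _
      exact (List.append_nil w) ▸ this
  · rw [leftQuotient_mul_of_notMem_starOf hw]
    exact Or.inr (sSup_mem_joinsWithTop hQ splitQuotients_subset_quotientSet)

theorem quotientCandidates_finite_and_ncard_le (hL' : IsRightIdeal L') (hL : IsRightIdeal L)
    (hC' : HasComplexity L' m) (hC : HasComplexity L n) (hn : 2 ≤ n) :
    (quotientCandidates L' L).Finite ∧
      (quotientCandidates L' L).ncard ≤ (m - 1) + (2 ^ (n - 2) + 1) + (2 ^ (n - 1) + 1) := by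
  have hF : starOf (alphabetOf L) ∈ quotientSet L \ {L} :=
    ⟨hL.starOf_mem_quotientSet, (hL.ne_starOf hC hn).symm⟩
  have hQL : (quotientSet L \ {L}).ncard = n - 1 := by
    rw [ncard_sdiff_singleton_of_mem (self_mem_quotientSet L), hC.2]
  have h₁ := hC'.1.sdiff (t := {starOf (alphabetOf L')})
  have h₂ := joinsWithTop_finite (t := starOf (alphabetOf L)) (hC.1.sdiff (t := {L}))
  have h₃ := joinsWithTop_finite (t := starOf (alphabetOf L)) hC.1
  have c₁ : ((· * L) '' (quotientSet L' \ {starOf (alphabetOf L')})).ncard ≤ m - 1 := by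
    rw [← hC'.2, ← ncard_sdiff_singleton_of_mem hL'.starOf_mem_quotientSet]
    exact ncard_image_le h₁
  have c₂ : ((starOf (alphabetOf L') * L + ·) ''
      joinsWithTop (quotientSet L \ {L}) (starOf (alphabetOf L))).ncard ≤ 2 ^ (n - 2) + 1 := by
    refine (ncard_image_le h₂).trans ((ncard_joinsWithTop_le (hC.1.sdiff) hF).trans ?_)
    rw [hQL, Nat.sub_sub]
  have c₃ := ncard_joinsWithTop_le hC.1 hL.starOf_mem_quotientSet
  rw [hC.2] at c₃
  refine ⟨((h₁.image _).union (h₂.image _)).union h₃, ?_⟩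
  exact (ncard_union_le _ _).trans (add_le_add ((ncard_union_le _ _).trans (add_le_add c₁ c₂)) c₃)

theorem IsRightIdeal.quotientSet_mul_finite_and_ncard_le (hL' : IsRightIdeal L')
    (hL : IsRightIdeal L) (hC' : HasComplexity L' m) (hC : HasComplexity L n) (hn : 2 ≤ n) :
    (quotientSet (L' * L)).Finite ∧
      (quotientSet (L' * L)).ncard ≤ m + 2 ^ (n - 2) + 2 ^ (n - 1) + 1 := by
  have hsub : quotientSet (L' * L) ⊆ quotientCandidates L' L := by
    rintro _ ⟨w, -, rfl⟩
    exact hL'.leftQuotient_mul_mem_quotientCandidates L w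
  obtain ⟨hfin, hcard⟩ := quotientCandidates_finite_and_ncard_le hL' hL hC' hC hn
  have hm : 0 < m := hC'.2 ▸ (ncard_pos hC'.1).mpr ⟨L', self_mem_quotientSet L'⟩
  exact ⟨hfin.subset hsub, (ncard_le_ncard hsub hfin).trans (by omega)⟩

end UpperBound

namespace ProductWitness

def zerosAtLeast (r : ℕ) : Language (Fin 5) :=
  {w | (∀ a ∈ w, a ≠ 4) ∧ r ≤ w.count 0}

section

variable {r k : ℕ} {u w : List (Fin 5)}

lemma mem_zerosAtLeast : w ∈ zerosAtLeast r ↔ (∀ a ∈ w, a ≠ 4) ∧ r ≤ w.count 0 :=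
  Iff.rfl

lemma nil_mem_zerosAtLeast_iff : [] ∈ zerosAtLeast r ↔ r = 0 := by
  simp [mem_zerosAtLeast]

lemma replicate_zero_mem_zerosAtLeast_iff : List.replicate k 0 ∈ zerosAtLeast r ↔ r ≤ k := by
  simp [mem_zerosAtLeast]

lemma leftQuotient_zerosAtLeast (hu : ∀ a ∈ u, a ≠ 4) :
    leftQuotient (zerosAtLeast r) u = zerosAtLeast (r - u.count 0) := by
  ext x
  simp only [leftQuotient, mem_zerosAtLeast, List.forall_mem_append, List.count_append,
    and_iff_right hu]
  exact and_congr_right fun _ => by omega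

lemma leftQuotient_zerosAtLeast_four : leftQuotient (zerosAtLeast r) [4] = 0 :=
  le_bot_iff.mp fun _ hx => hx.1 4 (List.mem_cons_self ..) rfl

lemma zerosAtLeast_injective : Function.Injective zerosAtLeast := by
  intro r s h
  have hr : List.replicate r 0 ∈ zerosAtLeast s :=
    h ▸ replicate_zero_mem_zerosAtLeast_iff.mpr le_rfl
  have hs : List.replicate s 0 ∈ zerosAtLeast r :=
    h ▸ replicate_zero_mem_zerosAtLeast_iff.mpr le_rfl
  exact le_antisymm (replicate_zero_mem_zerosAtLeast_iff.mp hs)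
    (replicate_zero_mem_zerosAtLeast_iff.mp hr)

lemma alphabetOf_zerosAtLeast (r : ℕ) : alphabetOf (zerosAtLeast r) = {4}ᶜ := by
  ext a
  refine ⟨fun ⟨s, t, h⟩ => h.1 a (by simp), fun ha => ⟨List.replicate r 0, [], ?_⟩⟩
  refine ⟨fun b hb => ?_, by simp⟩
  rcases List.mem_append.mp (List.append_nil _ ▸ hb) with hb | hb
  · rw [List.eq_of_mem_replicate hb]; decide
  · rw [List.mem_singleton.mp hb]; exact ha

lemma isRightIdeal_zerosAtLeast (r : ℕ) : IsRightIdeal (zerosAtLeast r) := by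
  refine isRightIdeal_of_append_singleton_mem
    ⟨_, replicate_zero_mem_zerosAtLeast_iff.mpr le_rfl⟩ fun w hw a ha => ?_
  rw [alphabetOf_zerosAtLeast] at ha
  refine ⟨fun b hb => ?_, ?_⟩
  · rcases List.mem_append.mp hb with hb | hb
    · exact hw.1 b hb
    · rw [List.mem_singleton.mp hb]; exact ha
  · rw [List.count_append]
    exact hw.2.trans (Nat.le_add_right _ _)

lemma quotientSet_zerosAtLeast (r : ℕ) : quotientSet (zerosAtLeast r) = zerosAtLeast '' Iic r := by
  ext K
  simp only [quotientSet, alphabetOf_zerosAtLeast]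
  constructor
  · rintro ⟨w, hw, rfl⟩
    exact ⟨r - w.count 0, Nat.sub_le r _, (leftQuotient_zerosAtLeast hw).symm⟩
  · rintro ⟨s, hs, rfl⟩
    refine ⟨List.replicate (r - s) 0, fun a ha => ?_, ?_⟩
    · rw [List.eq_of_mem_replicate ha]; decide
    · rw [leftQuotient_zerosAtLeast fun a ha => by rw [List.eq_of_mem_replicate ha]; decide]
      rw [List.count_replicate_self, Nat.sub_sub_self (mem_Iic.mp hs)]

lemma hasComplexity_zerosAtLeast (r : ℕ) : HasComplexity (zerosAtLeast r) (r + 1) := by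
  rw [HasComplexity, quotientSet_zerosAtLeast,
    zerosAtLeast_injective.injOn.ncard_image, Set.ncard_Iic_nat]
  exact ⟨(finite_Iic r).image _, rfl⟩

/-- Transitions of the witness DFA for `L`: the states `0, …, n - 2` form a cycle under the
letter `1`, `n - 1` is the accepting sink and `n` is the dead state, reached only by `0`. -/
def step (n s : ℕ) (a : Fin 5) : ℕ :=
  if a = 0 ∨ n ≤ s then n
  else if s = n - 1 then n - 1
  else if a = 3 then (if s = n - 2 then n - 1 else s)
  else if a = 4 ∨ (a = 2 ∧ s = 0) then s
  else if s = n - 2 then 0 else s + 1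

def dfa (n : ℕ) : DFA (Fin 5) ℕ := ⟨step n, 0, {n - 1}⟩

end

section

variable {n s i j k : ℕ} {a : Fin 5} {x : List (Fin 5)}

lemma step_dead (h : n ≤ s) : step n s a = n := by
  simp [step, h]

lemma step_zero : step n s 0 = n := by
  simp [step]

lemma step_sink (ha : a ≠ 0) : step n (n - 1) a = n - 1 := by
  unfold step; split_ifs <;> omega

lemma step_le (hs : s ≤ n - 1) (ha : a ≠ 0) : step n s a ≤ n - 1 := by
  unfold step; split_ifs <;> omega

lemma step_one (hs : s < n - 2) : step n s 1 = s + 1 := by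
  simp [step]; split_ifs <;> omega

lemma step_one_last : step n (n - 2) 1 = 0 := by
  simp [step]; split_ifs <;> omega

lemma step_two (h₁ : 1 ≤ s) (hs : s < n - 2) : step n s 2 = s + 1 := by
  simp [step]; split_ifs <;> omega

lemma step_two_zero : step n 0 2 = 0 := by
  simp [step]; split_ifs <;> omega

lemma step_three (hs : s < n - 2) : step n s 3 = s := by
  simp [step]; split_ifs <;> omega

lemma step_three_last (hn : 2 ≤ n) : step n (n - 2) 3 = n - 1 := by
  simp [step]; omega

lemma step_four (hs : s ≤ n - 1) : step n s 4 = s := by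
  simp [step]; split_ifs <;> omega

lemma step_image_shift (ha : a = 1 ∨ a = 2) (hk : k + 1 ≤ n - 2) {T : Set ℕ}
    (hT : T ⊆ Icc 1 (k + 1)) : (step n · a) '' {t | 1 ≤ t ∧ t + 1 ∈ T} = T \ {1} := by
  have hstep : ∀ t, 1 ≤ t → t < n - 2 → step n t a = t + 1 := by
    rcases ha with rfl | rfl
    exacts [fun t _ ht => step_one ht, fun t h₁ ht => step_two h₁ ht]
  ext x
  constructor
  · rintro ⟨t, ⟨ht₁, htT⟩, rfl⟩
    dsimp only
    rw [hstep t ht₁ (by have := mem_Icc.mp (hT htT); omega)]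
    exact ⟨htT, by simp; omega⟩
  · rintro ⟨hxT, hx₁⟩
    have hx := mem_Icc.mp (hT hxT)
    have hx₁ : x ≠ 1 := hx₁
    refine ⟨x - 1, ⟨by omega, by rwa [Nat.sub_add_cancel (by omega)]⟩, ?_⟩
    dsimp only
    rw [hstep _ (by omega) (by omega)]
    omega

lemma dfa_step : (dfa n).step = step n := rfl

lemma dfa_start : (dfa n).start = 0 := rfl

lemma mem_acceptsFrom_iff : x ∈ (dfa n).acceptsFrom s ↔ (dfa n).evalFrom s x = n - 1 :=
  Iff.rfl

lemma evalFrom_dead : (dfa n).evalFrom n x = n := by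
  induction x with
  | nil => rfl
  | cons a x ih => rwa [DFA.evalFrom_cons, dfa_step, step_dead le_rfl]

lemma evalFrom_sink (hx : ∀ a ∈ x, a ≠ 0) : (dfa n).evalFrom (n - 1) x = n - 1 := by
  induction x with
  | nil => rfl
  | cons a x ih =>
    rw [DFA.evalFrom_cons, dfa_step, step_sink (hx a (by simp))]
    exact ih fun b hb => hx b (by simp [hb])

lemma evalFrom_le (hs : s ≤ n - 1) (hx : ∀ a ∈ x, a ≠ 0) : (dfa n).evalFrom s x ≤ n - 1 := by
  induction x generalizing s with
  | nil => exact hs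
  | cons a x ih => exact ih (step_le hs (hx a (by simp))) fun b hb => hx b (by simp [hb])

lemma zero_notMem_of_mem_acceptsFrom (hn : 1 ≤ n) (hx : x ∈ (dfa n).acceptsFrom s) :
    (0 : Fin 5) ∉ x := by
  intro h0
  obtain ⟨u, v, rfl⟩ := List.append_of_mem h0
  rw [mem_acceptsFrom_iff, DFA.evalFrom_of_append, DFA.evalFrom_cons, dfa_step, step_zero,
    evalFrom_dead] at hx
  omega

lemma evalFrom_replicate_one (h : s + k ≤ n - 2) :
    (dfa n).evalFrom s (List.replicate k 1) = s + k := by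
  induction k generalizing s with
  | zero => rfl
  | succ k ih =>
    rw [List.replicate_succ, DFA.evalFrom_cons, dfa_step, step_one (by omega), ih (by omega)]
    omega

lemma evalFrom_replicate_one_of_lt (hij : i < j) (hj : j ≤ n - 2) :
    (dfa n).evalFrom j (List.replicate (n - 2 - i) 1) = j - i - 1 := by
  have hsplit : List.replicate (n - 2 - i) (1 : Fin 5) =
      List.replicate (n - 2 - j) 1 ++ 1 :: List.replicate (j - i - 1) 1 := by
    rw [← List.replicate_succ, ← List.replicate_add]
    congr 1
    omega
  rw [hsplit, DFA.evalFrom_of_append, evalFrom_replicate_one (by omega), DFA.evalFrom_cons,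
    dfa_step, show j + (n - 2 - j) = n - 2 by omega, step_one_last,
    evalFrom_replicate_one (by omega)]
  omega

def probe (n i : ℕ) : List (Fin 5) := 4 :: (List.replicate (n - 2 - i) 1 ++ [3])

lemma zero_notMem_probe : (0 : Fin 5) ∉ probe n i := by
  simp [probe, List.mem_replicate]

lemma evalFrom_probe_eq_iff (hn : 2 ≤ n) (hi : i ≤ n - 2) (hj : j ≤ n - 2) :
    (dfa n).evalFrom j (probe n i) = n - 1 ↔ j = i := by
  rw [probe, DFA.evalFrom_cons, DFA.evalFrom_of_append, DFA.evalFrom_singleton, dfa_step,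
    step_four (by omega)]
  rcases lt_trichotomy j i with hji | rfl | hji
  · rw [evalFrom_replicate_one (by omega), step_three (by omega)]
    omega
  · rw [evalFrom_replicate_one (by omega), show j + (n - 2 - j) = n - 2 by omega,
      step_three_last hn]
    simp
  · rw [evalFrom_replicate_one_of_lt hji hj, step_three (by omega)]
    omega

lemma probe_mem_acceptsFrom_iff (hn : 2 ≤ n) (hi : i ≤ n - 2) (hj : j ≤ n - 1) :
    probe n i ∈ (dfa n).acceptsFrom j ↔ j = i ∨ j = n - 1 := by
  rw [mem_acceptsFrom_iff]
  rcases eq_or_lt_of_le hj with rfl | hj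
  · exact iff_of_true (evalFrom_sink fun a ha h => zero_notMem_probe (h ▸ ha)) (Or.inr rfl)
  · rw [evalFrom_probe_eq_iff hn hi (by omega)]
    omega

end

section

variable {n s i j : ℕ} {x : List (Fin 5)}

lemma probe_zero_mem_accepts (hn : 2 ≤ n) : probe n 0 ∈ (dfa n).accepts :=
  (probe_mem_acceptsFrom_iff hn (Nat.zero_le _) (Nat.zero_le _)).mpr (Or.inl rfl)

lemma alphabetOf_accepts (hn : 2 ≤ n) : alphabetOf (dfa n).accepts = {0}ᶜ := by
  ext a
  refine ⟨fun ⟨u, v, h⟩ ha => zero_notMem_of_mem_acceptsFrom (by omega) h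
    (by simp [mem_singleton_iff.mp ha]),
    fun ha => ⟨probe n 0, [], ?_⟩⟩
  rw [List.append_nil, DFA.accepts, mem_acceptsFrom_iff, DFA.evalFrom_append_singleton,
    probe_zero_mem_accepts hn, dfa_step, step_sink ha]

lemma isRightIdeal_accepts (hn : 2 ≤ n) : IsRightIdeal (dfa n).accepts := by
  refine isRightIdeal_of_append_singleton_mem ⟨_, probe_zero_mem_accepts hn⟩ fun w hw a ha => ?_
  rw [alphabetOf_accepts hn] at ha
  rw [DFA.accepts, mem_acceptsFrom_iff, DFA.evalFrom_append_singleton, hw, dfa_step, step_sink ha]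

lemma nil_mem_acceptsFrom_iff : [] ∈ (dfa n).acceptsFrom s ↔ s = n - 1 :=
  Iff.rfl

lemma acceptsFrom_injOn (hn : 2 ≤ n) : InjOn (dfa n).acceptsFrom (Iic (n - 1)) := by
  have key : ∀ i ∈ Iic (n - 1), ∀ j ∈ Iic (n - 1),
      (dfa n).acceptsFrom i = (dfa n).acceptsFrom j → i ≠ n - 1 → j = i := by
    intro i hi j hj h hi'
    have hi₂ : i ≤ n - 2 := by have := mem_Iic.mp hi; omega
    have := (probe_mem_acceptsFrom_iff hn hi₂ hj).mp
      (h ▸ (probe_mem_acceptsFrom_iff hn hi₂ hi).mpr (Or.inl rfl))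
    rcases this with hji | hj'
    · exact hji
    · exact absurd (nil_mem_acceptsFrom_iff.mp (h ▸ nil_mem_acceptsFrom_iff.mpr hj')) hi'
  intro i hi j hj h
  by_cases hi' : i = n - 1
  · by_cases hj' : j = n - 1
    · rw [hi', hj']
    · exact key j hj i hi h.symm hj'
  · exact (key i hi j hj h hi').symm

lemma quotientSet_accepts (hn : 2 ≤ n) :
    quotientSet (dfa n).accepts = (dfa n).acceptsFrom '' Iic (n - 1) := by
  ext K
  simp only [quotientSet, alphabetOf_accepts hn]
  constructor
  · rintro ⟨w, hw, rfl⟩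
    exact ⟨_, evalFrom_le (Nat.zero_le _) hw, (leftQuotient_acceptsFrom _ _ _).symm⟩
  · rintro ⟨i, hi, rfl⟩
    rcases eq_or_lt_of_le (mem_Iic.mp hi) with rfl | hi
    · refine ⟨probe n 0, fun a ha h => zero_notMem_probe (h ▸ ha), ?_⟩
      rw [DFA.accepts, leftQuotient_acceptsFrom, probe_zero_mem_accepts hn]
    · refine ⟨List.replicate i 1, fun a ha => by rw [List.eq_of_mem_replicate ha]; decide, ?_⟩
      have : (dfa n).evalFrom 0 (List.replicate i 1) = i :=
        (evalFrom_replicate_one (by omega)).trans (zero_add i)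
      rw [DFA.accepts, leftQuotient_acceptsFrom]
      exact congrArg _ this.symm

lemma hasComplexity_accepts (hn : 2 ≤ n) : HasComplexity (dfa n).accepts n := by
  rw [HasComplexity, quotientSet_accepts hn, (acceptsFrom_injOn hn).ncard_image,
    Set.ncard_Iic_nat]
  exact ⟨(finite_Iic _).image _, by omega⟩

end

/-- The form of the quotients of `L' * L`: a quotient `q` of `L'` followed by `L`, together with
the languages of the states `S` that the DFA of `L` reaches after the prefixes lying in `L'`. -/
def productQuotient (n : ℕ) (q : Language (Fin 5)) (S : Set ℕ) : Language (Fin 5) :=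
  q * (dfa n).accepts + ⨆ s ∈ S, (dfa n).acceptsFrom s


section

variable {n r k i : ℕ} {q : Language (Fin 5)} {S : Set ℕ} {x : List (Fin 5)}

lemma productQuotient_empty : productQuotient n q ∅ = q * (dfa n).accepts := by
  rw [productQuotient, iSup_emptyset]
  exact add_zero _

lemma leftQuotient_productQuotient_of_nil_mem (h : [] ∈ q) (a : Fin 5) :
    leftQuotient (productQuotient n q S) [a] =
      productQuotient n (leftQuotient q [a]) (insert (step n 0 a) ((step n · a) '' S)) := by
  rw [productQuotient, productQuotient, leftQuotient_add, leftQuotient_mul_singleton_of_nil_mem h,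
    leftQuotient_iSup_acceptsFrom, iSup_insert, DFA.accepts, leftQuotient_acceptsFrom]
  exact add_assoc _ _ _

lemma leftQuotient_productQuotient_zero (w : List (Fin 5)) :
    leftQuotient (productQuotient n 0 S) w =
      productQuotient n 0 ((fun s => (dfa n).evalFrom s w) '' S) := by
  rw [productQuotient, productQuotient, zero_mul, zero_add, zero_add]
  exact leftQuotient_iSup_acceptsFrom _ _ _

lemma productQuotient_insert_zero :
    productQuotient n (zerosAtLeast 0) (insert 0 S) = productQuotient n (zerosAtLeast 0) S := by
  have hle : (dfa n).acceptsFrom 0 ≤ zerosAtLeast 0 * (dfa n).accepts :=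
    fun x hx => ⟨[], nil_mem_zerosAtLeast_iff.mpr rfl, x, hx, rfl⟩
  rw [productQuotient, productQuotient, iSup_insert]
  exact (sup_assoc _ _ _).symm.trans (congrArg (· ⊔ _) (sup_eq_left.mpr hle))

lemma mem_productQuotient :
    x ∈ productQuotient n q S ↔
      x ∈ q * (dfa n).accepts ∨ ∃ s ∈ S, x ∈ (dfa n).acceptsFrom s := by
  simp only [productQuotient, Language.mem_add, Language.mem_iSup, exists_prop]

lemma nil_mem_productQuotient_iff (hn : 2 ≤ n) : [] ∈ productQuotient n q S ↔ n - 1 ∈ S := by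
  rw [mem_productQuotient, or_iff_right]
  · exact ⟨fun ⟨s, hs, h⟩ => nil_mem_acceptsFrom_iff.mp h ▸ hs,
      fun h => ⟨_, h, nil_mem_acceptsFrom_iff.mpr rfl⟩⟩
  · intro h
    obtain ⟨u, -, v, hv, huv⟩ := Language.mem_mul.mp h
    rw [(List.append_eq_nil_iff.mp huv).2] at hv
    exact absurd (nil_mem_acceptsFrom_iff.mp hv : 0 = n - 1) (by omega)

lemma probe_mem_productQuotient_iff (hn : 2 ≤ n) (hS : S ⊆ Iic (n - 1)) (hi : i ≤ n - 2)
    (hq : probe n i ∉ q * (dfa n).accepts) :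
    probe n i ∈ productQuotient n q S ↔ i ∈ S ∨ n - 1 ∈ S := by
  rw [mem_productQuotient, or_iff_right hq]
  constructor
  · rintro ⟨s, hs, h⟩
    rcases (probe_mem_acceptsFrom_iff hn hi (hS hs)).mp h with rfl | rfl
    exacts [Or.inl hs, Or.inr hs]
  · rintro (h | h)
    exacts [⟨i, h, (probe_mem_acceptsFrom_iff (j := i) hn hi (by omega)).mpr (Or.inl rfl)⟩,
      ⟨n - 1, h, (probe_mem_acceptsFrom_iff hn hi le_rfl).mpr (Or.inr rfl)⟩]

lemma probe_mem_zerosAtLeast_mul_iff (hn : 2 ≤ n) (hi : i ≤ n - 2) :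
    probe n i ∈ zerosAtLeast r * (dfa n).accepts ↔ r = 0 ∧ i = 0 := by
  rw [probe, cons_mem_mul_iff fun u hu h4 => hu.1 4 h4 rfl, ← probe, nil_mem_zerosAtLeast_iff,
    DFA.accepts, dfa_start, probe_mem_acceptsFrom_iff hn hi (Nat.zero_le _)]
  omega

lemma replicate_zero_append_probe_mem_iff (hn : 2 ≤ n) :
    List.replicate k 0 ++ probe n 0 ∈ zerosAtLeast r * (dfa n).accepts ↔ r ≤ k := by
  have hcount : (List.replicate k (0 : Fin 5) ++ probe n 0).count 0 = k := by
    rw [List.count_append, List.count_replicate_self, List.count_eq_zero.mpr zero_notMem_probe,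
      add_zero]
  constructor
  · intro h
    obtain ⟨u, hu, v, -, huv⟩ := Language.mem_mul.mp h
    rw [← hcount, ← huv, List.count_append]
    exact hu.2.trans (Nat.le_add_right _ _)
  · exact fun h => Language.append_mem_mul (replicate_zero_mem_zerosAtLeast_iff.mpr h)
      (probe_zero_mem_accepts hn)

lemma notMem_productQuotient_zero (hn : 1 ≤ n) (hx : (0 : Fin 5) ∈ x) :
    x ∉ productQuotient n 0 S := by
  rw [mem_productQuotient, zero_mul]
  rintro (h | ⟨s, -, h⟩)
  exacts [Language.notMem_zero x h, zero_notMem_of_mem_acceptsFrom hn h hx]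

lemma zerosAtLeast_mul_injective (hn : 2 ≤ n) :
    Function.Injective fun r => zerosAtLeast r * (dfa n).accepts := by
  intro r s h
  replace h : zerosAtLeast r * (dfa n).accepts = zerosAtLeast s * (dfa n).accepts := h
  have hr := (replicate_zero_append_probe_mem_iff hn).mp
    (h ▸ (replicate_zero_append_probe_mem_iff (r := r) hn).mpr le_rfl)
  have hs := (replicate_zero_append_probe_mem_iff hn).mp
    (h ▸ (replicate_zero_append_probe_mem_iff (r := s) hn).mpr le_rfl)
  omega

lemma productQuotient_injOn (hn : 2 ≤ n) {X : Set ℕ} (hX : X ⊆ Iic (n - 2))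
    (hq : ∀ i ∈ X, probe n i ∉ q * (dfa n).accepts) :
    InjOn (productQuotient n q) (insert {0, n - 1} (𝒫 X)) := by
  have htX : n - 1 ∉ X := fun h => by have := mem_Iic.mp (hX h); omega
  have hsub : ∀ S ∈ insert {0, n - 1} (𝒫 X), S ⊆ Iic (n - 1) := by
    rintro S (rfl | hS) s hs
    · rcases hs with rfl | rfl <;> simp
    · exact mem_Iic.mpr ((mem_Iic.mp (hX (hS hs))).trans (by omega))
  intro S hS S' hS' h
  refine eq_of_mem_insert_powerset (by simp) htX hS hS' ?_ fun i hi => ?_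
  · rw [← nil_mem_productQuotient_iff hn, ← nil_mem_productQuotient_iff hn, h]
  · have hi' := mem_Iic.mp (hX hi)
    rw [← probe_mem_productQuotient_iff hn (hsub S hS) hi' (hq i hi),
      ← probe_mem_productQuotient_iff hn (hsub S' hS') hi' (hq i hi), h]

end

section

variable {m n : ℕ}

lemma alphabetOf_zerosAtLeast_mul (r : ℕ) (hn : 2 ≤ n) :
    alphabetOf (zerosAtLeast r * (dfa n).accepts) = univ := by
  refine eq_univ_of_forall fun a => union_subset_alphabetOf_mul
    ⟨_, replicate_zero_mem_zerosAtLeast_iff.mpr le_rfl⟩ ⟨_, probe_zero_mem_accepts hn⟩ ?_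
  rw [alphabetOf_zerosAtLeast, alphabetOf_accepts hn]
  by_cases ha : a = 4
  · exact Or.inr (by simp [ha])
  · exact Or.inl ha

local notation "𝒬" m:max n:max => quotientSet (zerosAtLeast (m - 1) * DFA.accepts (dfa n))

lemma leftQuotient_mem (hn : 2 ≤ n) {K : Language (Fin 5)} (hK : K ∈ 𝒬 m n) (u : List (Fin 5)) :
    leftQuotient K u ∈ 𝒬 m n :=
  leftQuotient_mem_quotientSet (alphabetOf_zerosAtLeast_mul _ hn) hK u

lemma zerosAtLeast_mul_mem (hn : 2 ≤ n) {i : ℕ} (hi : i ≤ m - 1) :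
    zerosAtLeast (m - 1 - i) * (dfa n).accepts ∈ 𝒬 m n := by
  induction i with
  | zero => exact self_mem_quotientSet _
  | succ i ih =>
    have h := leftQuotient_mem hn (ih (by omega)) [0]
    rw [leftQuotient_mul_singleton_of_nil_notMem (by rw [nil_mem_zerosAtLeast_iff]; omega),
      leftQuotient_zerosAtLeast (by simp)] at h
    convert h using 3
    simp
    omega

lemma leftQuotient_zerosAtLeast_zero {a : Fin 5} (ha : a ≠ 4) :
    leftQuotient (zerosAtLeast 0) [a] = zerosAtLeast 0 := by
  rw [leftQuotient_zerosAtLeast (by simpa using ha), Nat.zero_sub]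

lemma productQuotient_zerosAtLeast_zero_mem (hn : 2 ≤ n) {k : ℕ} (hk : k ≤ n - 2) {T : Set ℕ}
    (hT : T ⊆ Icc 1 k) : productQuotient n (zerosAtLeast 0) T ∈ 𝒬 m n := by
  induction k generalizing T with
  | zero =>
    have hT₀ : T = ∅ := subset_empty_iff.mp fun t ht => by have := mem_Icc.mp (hT ht); omega
    rw [hT₀, productQuotient_empty]
    simpa using zerosAtLeast_mul_mem (m := m) (by omega) (le_refl (m - 1))
  | succ k ih =>
    set T' : Set ℕ := {t | 1 ≤ t ∧ t + 1 ∈ T}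
    have hT' : T' ⊆ Icc 1 k := fun t ht => ⟨ht.1, by have := mem_Icc.mp (hT ht.2); omega⟩
    have hmem := leftQuotient_mem (by omega) (ih (by omega) hT')
    have hnil := nil_mem_zerosAtLeast_iff.mpr (rfl : 0 = 0)
    by_cases h₁ : 1 ∈ T
    · have h := hmem [1]
      rwa [leftQuotient_productQuotient_of_nil_mem hnil, leftQuotient_zerosAtLeast_zero (by decide),
        step_image_shift (Or.inl rfl) hk hT, step_one (by omega), insert_sdiff_self_of_mem h₁] at h
    · have h := hmem [2]
      rwa [leftQuotient_productQuotient_of_nil_mem hnil, leftQuotient_zerosAtLeast_zero (by decide),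
        step_image_shift (Or.inr rfl) hk hT, step_two_zero, productQuotient_insert_zero,
        sdiff_singleton_eq_self h₁] at h

lemma productQuotient_zerosAtLeast_zero_top_mem (hn : 3 ≤ n) :
    productQuotient n (zerosAtLeast 0) {0, n - 1} ∈ 𝒬 m n := by
  have h := leftQuotient_mem (by omega) (productQuotient_zerosAtLeast_zero_mem (m := m) (n := n)
    (by omega) le_rfl (singleton_subset_iff.mpr (mem_Icc.mpr ⟨by omega, le_rfl⟩))) [3]
  rwa [leftQuotient_productQuotient_of_nil_mem (nil_mem_zerosAtLeast_iff.mpr rfl),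
    leftQuotient_zerosAtLeast_zero (by decide), image_singleton, step_three_last (by omega),
    step_three (by omega)] at h

lemma productQuotient_zero_insert_zero_mem (hn : 2 ≤ n) {T : Set ℕ} (hT : T ⊆ Iic (n - 1))
    (h : productQuotient n (zerosAtLeast 0) T ∈ 𝒬 m n) :
    productQuotient n 0 (insert 0 T) ∈ 𝒬 m n := by
  have h₄ := leftQuotient_mem (by omega) h [4]
  rwa [leftQuotient_productQuotient_of_nil_mem (nil_mem_zerosAtLeast_iff.mpr rfl),
    leftQuotient_zerosAtLeast_four, step_four (by omega),
    image_congr fun t ht => step_four (mem_Iic.mp (hT ht)), image_id'] at h₄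

lemma productQuotient_zero_mem (hm : 2 ≤ m) (hn : 2 ≤ n) {U : Set ℕ} (hU : U ⊆ Iic (n - 2)) :
    productQuotient n 0 U ∈ 𝒬 m n := by
  rcases U.eq_empty_or_nonempty with rfl | hne
  · have h := leftQuotient_mem (m := m) (n := n) (by omega) (self_mem_quotientSet _) [4]
    rw [productQuotient_empty, zero_mul]
    rwa [leftQuotient_mul_singleton_of_nil_notMem (by rw [nil_mem_zerosAtLeast_iff]; omega),
      leftQuotient_zerosAtLeast_four, zero_mul] at h
  -- shift `U` down to a set containing `0`, reach that one, and rotate it back with `1 ^ k`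
  obtain ⟨k, hk, hkU⟩ : ∃ k ∈ U, ∀ u ∈ U, k ≤ u := ⟨_, Nat.sInf_mem hne, fun u => Nat.sInf_le⟩
  set V := (· - k) '' U
  have h₀ : 0 ∈ V := ⟨k, hk, Nat.sub_self k⟩
  have hV : productQuotient n 0 V ∈ 𝒬 m n := by
    have hT : V \ {0} ⊆ Icc 1 (n - 2) := by
      rintro _ ⟨⟨u, hu, rfl⟩, hu₀⟩
      have := mem_Iic.mp (hU hu)
      have hu₀ : u - k ≠ 0 := hu₀
      show u - k ∈ Icc 1 (n - 2)
      exact mem_Icc.mpr ⟨by omega, by omega⟩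
    have := productQuotient_zero_insert_zero_mem (m := m) (by omega)
      (hT.trans fun x hx => mem_Iic.mpr (by have := mem_Icc.mp hx; omega))
      (productQuotient_zerosAtLeast_zero_mem (by omega) le_rfl hT)
    rwa [insert_sdiff_self_of_mem h₀] at this
  have h := leftQuotient_mem (by omega) hV (List.replicate k 1)
  rw [leftQuotient_productQuotient_zero, image_image] at h
  convert h using 2
  refine ((image_congr fun u hu => ?_).trans (image_id' U)).symm
  have := hkU u hu
  have := mem_Iic.mp (hU hu)
  rw [evalFrom_replicate_one (by omega)]
  omega

def beforeIdealQuotients (m n : ℕ) : Set (Language (Fin 5)) :=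
  (fun r => zerosAtLeast r * (dfa n).accepts) '' Icc 1 (m - 1)

def insideIdealQuotients (n : ℕ) : Set (Language (Fin 5)) :=
  productQuotient n (zerosAtLeast 0) '' insert {0, n - 1} (𝒫 (Icc 1 (n - 2)))

def outsideAlphabetQuotients (n : ℕ) : Set (Language (Fin 5)) :=
  productQuotient n 0 '' insert {0, n - 1} (𝒫 (Iic (n - 2)))

lemma beforeIdealQuotients_subset (hn : 2 ≤ n) : beforeIdealQuotients m n ⊆ 𝒬 m n := by
  rintro _ ⟨r, hr, rfl⟩
  have := zerosAtLeast_mul_mem (m := m) hn (Nat.sub_le (m - 1) r)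
  rwa [Nat.sub_sub_self (mem_Icc.mp hr).2] at this

lemma insideIdealQuotients_subset (hn : 3 ≤ n) : insideIdealQuotients n ⊆ 𝒬 m n := by
  rintro _ ⟨T, rfl | hT, rfl⟩
  exacts [productQuotient_zerosAtLeast_zero_top_mem hn,
    productQuotient_zerosAtLeast_zero_mem (by omega) le_rfl hT]

lemma outsideAlphabetQuotients_subset (hm : 2 ≤ m) (hn : 3 ≤ n) :
    outsideAlphabetQuotients n ⊆ 𝒬 m n := by
  rintro _ ⟨U, rfl | hU, rfl⟩
  · have := productQuotient_zero_insert_zero_mem (by omega) (by simp [insert_subset_iff])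
      (productQuotient_zerosAtLeast_zero_top_mem (m := m) hn)
    rwa [insert_eq_of_mem (mem_insert 0 _)] at this
  · exact productQuotient_zero_mem hm (by omega) hU

lemma ncard_beforeIdealQuotients (hn : 2 ≤ n) : (beforeIdealQuotients m n).ncard = m - 1 := by
  rw [beforeIdealQuotients, (zerosAtLeast_mul_injective hn).injOn.ncard_image, Set.ncard_Icc_nat]
  omega

lemma ncard_insideIdealQuotients (hn : 2 ≤ n) :
    (insideIdealQuotients n).ncard = 2 ^ (n - 2) + 1 := by
  have hq : ∀ i ∈ Icc 1 (n - 2), probe n i ∉ zerosAtLeast 0 * (dfa n).accepts := fun i hi h => by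
    have := (probe_mem_zerosAtLeast_mul_iff hn (mem_Icc.mp hi).2).mp h
    have := (mem_Icc.mp hi).1
    omega
  rw [insideIdealQuotients, (productQuotient_injOn hn (fun x hx => mem_Iic.mpr (mem_Icc.mp hx).2)
    hq).ncard_image, ncard_insert_powerset (finite_Icc _ _)
    (fun h => by simpa using h (mem_insert 0 _)), Set.ncard_Icc_nat, Nat.add_sub_cancel]

lemma ncard_outsideAlphabetQuotients (hn : 2 ≤ n) :
    (outsideAlphabetQuotients n).ncard = 2 ^ (n - 1) + 1 := by
  have hq : ∀ i ∈ Iic (n - 2), probe n i ∉ (0 : Language (Fin 5)) * (dfa n).accepts :=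
    fun i _ h => Language.notMem_zero _ ((zero_mul (dfa n).accepts) ▸ h)
  have hE : ¬{0, n - 1} ⊆ Iic (n - 2) := fun h => by
    have := mem_Iic.mp (h (mem_insert_of_mem 0 (mem_singleton (n - 1))))
    omega
  rw [outsideAlphabetQuotients, (productQuotient_injOn hn subset_rfl hq).ncard_image,
    ncard_insert_powerset (finite_Iic _) hE, Set.ncard_Iic_nat]
  congr 2
  omega

lemma disjoint_beforeIdealQuotients_insideIdealQuotients (hn : 2 ≤ n) :
    Disjoint (beforeIdealQuotients m n) (insideIdealQuotients n) := by
  refine disjoint_left.mpr ?_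
  rintro _ ⟨r, hr, rfl⟩ ⟨T, -, hT⟩
  have h := (mem_productQuotient (S := T)).mpr (Or.inl ((probe_mem_zerosAtLeast_mul_iff
    (r := 0) (i := 0) hn (Nat.zero_le _)).mpr ⟨rfl, rfl⟩))
  rw [hT, probe_mem_zerosAtLeast_mul_iff hn (Nat.zero_le _)] at h
  exact absurd h.1 (by have := (mem_Icc.mp hr).1; omega)

lemma disjoint_outsideAlphabetQuotients (hn : 2 ≤ n) :
    Disjoint (beforeIdealQuotients m n ∪ insideIdealQuotients n) (outsideAlphabetQuotients n) := by
  refine disjoint_left.mpr ?_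
  rintro _ (⟨r, hr, rfl⟩ | ⟨T, -, rfl⟩) ⟨U, -, hU⟩
  · have h := (replicate_zero_append_probe_mem_iff (k := r) (r := r) hn).mpr le_rfl
    rw [← show productQuotient n 0 U = zerosAtLeast r * (dfa n).accepts from hU] at h
    exact notMem_productQuotient_zero (by omega)
      (List.mem_append_left _ (List.mem_replicate.mpr ⟨by have := (mem_Icc.mp hr).1; omega, rfl⟩)) h
  · have h := (mem_productQuotient (S := T)).mpr (Or.inl ((replicate_zero_append_probe_mem_iff
      (k := 1) (r := 0) hn).mpr (Nat.zero_le 1)))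
    rw [← hU] at h
    exact notMem_productQuotient_zero (by omega) (by simp) h

lemma le_ncard_quotientSet (hm : 2 ≤ m) (hn : 3 ≤ n) (hfin : (𝒬 m n).Finite) :
    m + 2 ^ (n - 2) + 2 ^ (n - 1) + 1 ≤ (𝒬 m n).ncard := by
  have hA := beforeIdealQuotients_subset (m := m) (by omega : 2 ≤ n)
  have hB := insideIdealQuotients_subset (m := m) hn
  have hC := outsideAlphabetQuotients_subset hm hn
  calc m + 2 ^ (n - 2) + 2 ^ (n - 1) + 1 = (beforeIdealQuotients m n ∪ insideIdealQuotients n ∪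
        outsideAlphabetQuotients n).ncard := by
        rw [ncard_union_eq (disjoint_outsideAlphabetQuotients (by omega))
          ((hfin.subset hA).union (hfin.subset hB)) (hfin.subset hC),
          ncard_union_eq (disjoint_beforeIdealQuotients_insideIdealQuotients (by omega))
          (hfin.subset hA) (hfin.subset hB), ncard_beforeIdealQuotients (by omega),
          ncard_insideIdealQuotients (by omega), ncard_outsideAlphabetQuotients (by omega)]
        omega
    _ ≤ (𝒬 m n).ncard := ncard_le_ncard (union_subset (union_subset hA hB) hC) hfin

theorem hasComplexity_zerosAtLeast_mul (hm : 2 ≤ m) (hn : 3 ≤ n) :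
    HasComplexity (zerosAtLeast (m - 1) * (dfa n).accepts) (m + 2 ^ (n - 2) + 2 ^ (n - 1) + 1) := by
  have hC' := hasComplexity_zerosAtLeast (m - 1)
  rw [Nat.sub_add_cancel (by omega : 1 ≤ m)] at hC'
  obtain ⟨hfin, hle⟩ := (isRightIdeal_zerosAtLeast (m - 1)).quotientSet_mul_finite_and_ncard_le
    (isRightIdeal_accepts (by omega)) hC' (hasComplexity_accepts (n := n) (by omega)) (by omega)
  exact ⟨hfin, le_antisymm hle (le_ncard_quotientSet hm hn hfin)⟩

end

end ProductWitness

open ProductWitness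

/-- unrestricted complexity of product of right ideals:
upper bound `m + 2^(n-2) + 2^(n-1) + 1`, and tightness with four-letter alphabets
neither containing the other. -/
theorem right_ideal_product (m n : ℕ) (hm : 3 ≤ m) (hn : 3 ≤ n) :
    (∀ (α : Type) (L' L : Language α), IsRightIdeal L' → IsRightIdeal L →
      HasComplexity L' m → HasComplexity L n →
      (quotientSet (L' * L)).Finite ∧
        (quotientSet (L' * L)).ncard ≤ m + 2 ^ (n - 2) + 2 ^ (n - 1) + 1) ∧
    (∃ L' L : Language (Fin 5), IsRightIdeal L' ∧ IsRightIdeal L ∧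
      (alphabetOf L').ncard = 4 ∧ (alphabetOf L).ncard = 4 ∧
      (alphabetOf L' \ alphabetOf L).Nonempty ∧
      (alphabetOf L \ alphabetOf L').Nonempty ∧
      HasComplexity L' m ∧ HasComplexity L n ∧
      HasComplexity (L' * L) (m + 2 ^ (n - 2) + 2 ^ (n - 1) + 1)) := by
  refine ⟨fun α L' L hL' hL hC' hC => hL'.quotientSet_mul_finite_and_ncard_le hL hC' hC (by omega),
    zerosAtLeast (m - 1), (dfa n).accepts, isRightIdeal_zerosAtLeast _,
    isRightIdeal_accepts (by omega), ?_, ?_, ?_, ?_, ?_, hasComplexity_accepts (by omega),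
    hasComplexity_zerosAtLeast_mul (by omega) hn⟩
  · rw [alphabetOf_zerosAtLeast, ncard_compl]; simp
  · rw [alphabetOf_accepts (by omega), ncard_compl]; simp
  · rw [alphabetOf_zerosAtLeast, alphabetOf_accepts (by omega)]
    exact ⟨0, by simp⟩
  · rw [alphabetOf_zerosAtLeast, alphabetOf_accepts (by omega)]
    exact ⟨4, by simp⟩
  · simpa [Nat.sub_add_cancel (by omega : 1 ≤ m)] using hasComplexity_zerosAtLeast (m - 1)
end

section
/- For all m, n ≥ 3 there exist right ideals L' and L, with alphabets Σ_{L'} and Σ_L satisfying Σ_{L'} \ Σ_L ≠ ∅ and Σ_L \ Σ_{L'} ≠ ∅, such that L' has quotient complexity m, L has quotient complexity n, κ(L' ∪ L) = (m+1)(n+1), and κ(L' ⊕ L) = (m+1)(n+1), where L' ⊕ L = (L' \ L) ∪ (L \ L') is the symmetric difference. (Thus the unrestricted complexity of union and symmetric difference on right ideals equals that on arbitrary regular languages.) -/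
/-! `L'` is the set of words over `{0, 1, 2}` with at least `m - 1` zeros and `L` the set of words
over `{0, 1, 3}` with at least `n - 1` ones. A quotient of either is again of this form (a lower
count threshold) or empty, once a letter outside its alphabet has been read. For any
Boolean operation `∘` that acts as the identity when one side is empty, the quotients of `L' ∘ L`
are therefore indexed by pairs of such states, `(m + 1)(n + 1)` in all. Every pair is reached by
`0^i 1^j`, followed by `3` and/or `2` to kill a side, and two pairs are told apart by a word
`0^t 2` or `1^t 3`, which lies in only one of the two operands. -/

section Quotients

variable {α ι : Type*}

theorem mem_alphabetOf_of_mem_s11 {L : Language α} {x : List α} {a : α} (hx : x ∈ L) (ha : a ∈ x) :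
    a ∈ alphabetOf L := by
  obtain ⟨s, t, rfl⟩ := List.append_of_mem ha
  exact ⟨s, t, by simpa using hx⟩

theorem HasComplexity.of_injective [Finite ι] {L : Language α} {F : ι → Language α}
    (hF : F.Injective) (σ : List α → ι)
    (hσ : ∀ w, (∀ a ∈ w, a ∈ alphabetOf L) → leftQuotient L w = F (σ w))
    (hreach : ∀ i, ∃ w, (∀ a ∈ w, a ∈ alphabetOf L) ∧ σ w = i) :
    HasComplexity L (Nat.card ι) := by
  have hrange : quotientSet L = Set.range F := by
    ext K
    constructor
    · rintro ⟨w, hw, rfl⟩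
      exact ⟨σ w, (hσ w hw).symm⟩
    · rintro ⟨i, rfl⟩
      obtain ⟨w, hw, rfl⟩ := hreach i
      exact ⟨w, hw, (hσ w hw).symm⟩
  exact ⟨hrange ▸ Set.finite_range F, by rw [hrange, Set.ncard_range_of_injective hF]⟩

def combine (f : Prop → Prop → Prop) (A B : Language α) : Language α :=
  {x | f (x ∈ A) (x ∈ B)}

theorem leftQuotient_combine (f : Prop → Prop → Prop) (A B : Language α) (w : List α) :
    leftQuotient (combine f A B) w = combine f (leftQuotient A w) (leftQuotient B w) :=
  rfl

theorem combine_flip (f : Prop → Prop → Prop) (A B : Language α) :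
    combine (flip f) B A = combine f A B :=
  rfl

theorem mem_combine_of_not_mem_right {f : Prop → Prop → Prop} (hf : ∀ p, f p False ↔ p)
    {A B : Language α} {x : List α} (hx : x ∉ B) : x ∈ combine f A B ↔ x ∈ A := by
  change f _ _ ↔ _
  rw [eq_false hx, hf]

theorem mem_combine_of_not_mem_left {f : Prop → Prop → Prop} (hf : ∀ q, f False q ↔ q)
    {A B : Language α} {x : List α} (hx : x ∉ A) : x ∈ combine f A B ↔ x ∈ B :=
  mem_combine_of_not_mem_right (f := flip f) hf hx

end Quotients

section CountAtLeast

variable {α : Type*} [DecidableEq α] {S : Set α} {c : α}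

def countAtLeast (S : Set α) (c : α) (k : ℕ) : Language α :=
  {x | (∀ a ∈ x, a ∈ S) ∧ k ≤ x.count c}

theorem not_mem_countAtLeast {k : ℕ} {x : List α} {a : α} (ha : a ∈ x) (haS : a ∉ S) :
    x ∉ countAtLeast S c k :=
  fun hx => haS (hx.1 a ha)

theorem replicate_append_mem_countAtLeast (hc : c ∈ S) {v : List α}
    (hv : ∀ a ∈ v, a ∈ S ∧ a ≠ c) {k t : ℕ} :
    List.replicate t c ++ v ∈ countAtLeast S c k ↔ k ≤ t := by
  have hv₀ : v.count c = 0 := List.count_eq_zero.2 fun h => (hv c h).2 rfl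
  change (∀ a ∈ List.replicate t c ++ v, a ∈ S) ∧ k ≤ _ ↔ _
  rw [List.count_append, List.count_replicate_self, hv₀, add_zero, and_iff_right]
  exact List.forall_mem_append.2
    ⟨fun a ha => List.eq_of_mem_replicate ha ▸ hc, fun a ha => (hv a ha).1⟩

theorem replicate_mem_countAtLeast (hc : c ∈ S) {k t : ℕ} :
    List.replicate t c ∈ countAtLeast S c k ↔ k ≤ t := by
  simpa using replicate_append_mem_countAtLeast hc (v := []) (by simp)

theorem countAtLeast_injective (hc : c ∈ S) : (countAtLeast S c).Injective := by
  intro k k' h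
  have mem (j : ℕ) : List.replicate j c ∈ countAtLeast S c j :=
    (replicate_mem_countAtLeast hc).2 le_rfl
  have h₁ : k' ≤ k := (replicate_mem_countAtLeast hc).1 (h ▸ mem k)
  have h₂ : k ≤ k' := (replicate_mem_countAtLeast hc).1 (h ▸ mem k')
  omega

theorem alphabetOf_countAtLeast (hc : c ∈ S) (k : ℕ) : alphabetOf (countAtLeast S c k) = S := by
  ext a
  refine ⟨fun ⟨u, v, huv⟩ => huv.1 a (by simp), fun ha => ?_⟩
  refine mem_alphabetOf_of_mem_s11 (x := a :: List.replicate k c) ⟨?_, ?_⟩ List.mem_cons_self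
  · simp [List.mem_replicate, ha, hc]
  · simp [List.count_cons]

theorem isRightIdeal_countAtLeast (hc : c ∈ S) (k : ℕ) : IsRightIdeal (countAtLeast S c k) := by
  refine ⟨⟨_, (replicate_mem_countAtLeast hc).2 le_rfl⟩, ?_⟩
  rw [alphabetOf_countAtLeast hc]
  ext x
  simp only [Language.mem_mul]
  constructor
  · rintro ⟨u, ⟨huS, hu⟩, v, hv, rfl⟩
    refine ⟨List.forall_mem_append.2 ⟨huS, hv⟩, ?_⟩
    rw [List.count_append]
    omega
  · intro hx
    exact ⟨x, hx, [], List.forall_mem_nil _, x.append_nil⟩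

theorem leftQuotient_countAtLeast {k : ℕ} {w : List α} (hw : ∀ a ∈ w, a ∈ S) :
    leftQuotient (countAtLeast S c k) w = countAtLeast S c (k - w.count c) := by
  ext x
  change (∀ a ∈ w ++ x, a ∈ S) ∧ _ ↔ (∀ a ∈ x, a ∈ S) ∧ _
  rw [List.forall_mem_append, List.count_append]
  constructor
  · rintro ⟨⟨-, hx⟩, hk⟩
    exact ⟨hx, by omega⟩
  · rintro ⟨hx, hk⟩
    exact ⟨⟨hw, hx⟩, by omega⟩

theorem leftQuotient_countAtLeast_eq_bot {k : ℕ} {w : List α} (hw : ¬ ∀ a ∈ w, a ∈ S) :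
    leftQuotient (countAtLeast S c k) w = ⊥ := by
  ext x
  exact iff_of_false (fun hx => hw fun a ha => hx.1 a (List.mem_append_left x ha)) id

theorem hasComplexity_countAtLeast (hc : c ∈ S) (k : ℕ) :
    HasComplexity (countAtLeast S c k) (k + 1) := by
  have hF : (fun j : Fin (k + 1) => countAtLeast S c j).Injective :=
    (countAtLeast_injective hc).comp Fin.val_injective
  convert HasComplexity.of_injective hF (fun w => ⟨k - w.count c, by omega⟩) (fun w hw => ?_)
    (fun j => ⟨List.replicate (k - j) c, ?_, ?_⟩)
  · simp
  · rw [alphabetOf_countAtLeast hc] at hw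
    exact leftQuotient_countAtLeast hw
  · simp [List.mem_replicate, alphabetOf_countAtLeast hc, hc]
  · ext
    simp only [List.count_replicate_self]
    omega

end CountAtLeast

section States

variable {α : Type*} [DecidableEq α] {S : Set α} {c : α} {k : ℕ}

/-- The quotients of `countAtLeast S c k`, with `none` standing for the empty one. -/
def countQuotient (S : Set α) (c : α) {k : ℕ} : Option (Fin (k + 1)) → Language α
  | none => ⊥
  | some j => countAtLeast S c j

open Classical in
noncomputable def countState (S : Set α) (c : α) (k : ℕ) (w : List α) : Option (Fin (k + 1)) :=
  if ∀ a ∈ w, a ∈ S then some ⟨k - w.count c, by omega⟩ else none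

theorem leftQuotient_countAtLeast_eq_countQuotient (w : List α) :
    leftQuotient (countAtLeast S c k) w = countQuotient S c (countState S c k w) := by
  unfold countState
  split_ifs with hw
  · exact leftQuotient_countAtLeast hw
  · exact leftQuotient_countAtLeast_eq_bot hw

theorem not_mem_countQuotient {o : Option (Fin (k + 1))} {x : List α} {a : α} (ha : a ∈ x)
    (haS : a ∉ S) : x ∉ countQuotient S c o := by
  cases o with
  | none => exact id
  | some j => exact not_mem_countAtLeast ha haS

theorem countQuotient_eq_of_forall_mem_iff {d : α} (hc : c ∈ S) (hd : d ∈ S) (hdc : d ≠ c)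
    {o o' : Option (Fin (k + 1))}
    (h : ∀ t, List.replicate t c ++ [d] ∈ countQuotient S c o ↔
      List.replicate t c ++ [d] ∈ countQuotient S c o') : o = o' := by
  have hdS : ∀ a ∈ [d], a ∈ S ∧ a ≠ c := by simpa using ⟨hd, hdc⟩
  have mem : ∀ (j : Fin (k + 1)) t,
      List.replicate t c ++ [d] ∈ countQuotient S c (some j) ↔ (j : ℕ) ≤ t :=
    fun j t => replicate_append_mem_countAtLeast hc hdS
  rcases o with _ | j <;> rcases o' with _ | j'
  · rfl
  · exact ((h j').2 ((mem j' j').2 le_rfl)).elim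
  · exact ((h j).1 ((mem j j).2 le_rfl)).elim
  · have h₁ : (j' : ℕ) ≤ j := (mem j' j).1 ((h j).1 ((mem j j).2 le_rfl))
    have h₂ : (j : ℕ) ≤ j' := (mem j j').1 ((h j').2 ((mem j' j').2 le_rfl))
    exact congrArg some (Fin.ext (by omega))

def reachWord (c e : α) {k : ℕ} : Option (Fin (k + 1)) → List α
  | none => [e]
  | some j => List.replicate (k - j) c

omit [DecidableEq α] in
theorem eq_or_eq_of_mem_reachWord {e a : α} {o : Option (Fin (k + 1))}
    (ha : a ∈ reachWord c e o) : a = c ∨ a = e := by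
  cases o with
  | none => exact Or.inr (List.mem_singleton.1 ha)
  | some j => exact Or.inl (List.eq_of_mem_replicate ha)

theorem countState_reachWord {e : α} (hc : c ∈ S) (he : e ∉ S) (o : Option (Fin (k + 1))) :
    countState S c k (reachWord c e o) = o := by
  cases o with
  | none => simp [countState, reachWord, he]
  | some j =>
    have hw : ∀ a ∈ reachWord c e (some j), a ∈ S :=
      fun a ha => (List.eq_of_mem_replicate ha : a = c) ▸ hc
    rw [countState, if_pos hw]
    exact congrArg some (Fin.ext (by simp only [reachWord, List.count_replicate_self]; omega))

theorem countState_append_of_neutral_right {u v : List α} (hv : ∀ a ∈ v, a ∈ S ∧ a ≠ c) :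
    countState S c k (u ++ v) = countState S c k u := by
  have hv₀ : v.count c = 0 := List.count_eq_zero.2 fun h => (hv c h).2 rfl
  have hS : (∀ a ∈ u ++ v, a ∈ S) ↔ ∀ a ∈ u, a ∈ S := by
    rw [List.forall_mem_append, and_iff_left fun a ha => (hv a ha).1]
  simp only [countState, List.count_append, hv₀, add_zero]
  congr 1
  exact propext hS

theorem countState_append_of_neutral_left {u v : List α} (hv : ∀ a ∈ v, a ∈ S ∧ a ≠ c) :
    countState S c k (v ++ u) = countState S c k u := by
  have hv₀ : v.count c = 0 := List.count_eq_zero.2 fun h => (hv c h).2 rfl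
  have hS : (∀ a ∈ v ++ u, a ∈ S) ↔ ∀ a ∈ u, a ∈ S := by
    rw [List.forall_mem_append, and_iff_right fun a ha => (hv a ha).1]
  simp only [countState, List.count_append, hv₀, zero_add]
  congr 1
  exact propext hS

end States

section Combine

variable {α : Type*} [DecidableEq α] {f : Prop → Prop → Prop} {S T : Set α} {c c' d e : α}

theorem subset_alphabetOf_combine (hf : ∀ p, f p False ↔ p) {B : Language α} (hc : c ∈ S)
    (hd : d ∈ S) (hB : ∀ x, d ∈ x → x ∉ B) (k : ℕ) :
    S ⊆ alphabetOf (combine f (countAtLeast S c k) B) := by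
  intro a ha
  have hx : a :: d :: List.replicate k c ∈ countAtLeast S c k := by
    refine ⟨?_, ?_⟩
    · simp [List.mem_replicate, ha, hd, hc]
    · simp only [List.count_cons, List.count_replicate_self]
      split_ifs <;> omega
  exact mem_alphabetOf_of_mem_s11 ((mem_combine_of_not_mem_right hf (hB _ (by simp))).2 hx)
    List.mem_cons_self

theorem hasComplexity_combine_countAtLeast (hf₁ : ∀ p, f p False ↔ p)
    (hf₂ : ∀ q, f False q ↔ q) (hc : c ∈ S ∩ T) (hc' : c' ∈ S ∩ T) (hcc' : c ≠ c')
    (hd : d ∈ S \ T) (he : e ∈ T \ S) (k l : ℕ) :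
    HasComplexity (combine f (countAtLeast S c k) (countAtLeast T c' l)) ((k + 2) * (l + 2)) := by
  have hdc : d ≠ c := fun h => hd.2 (h ▸ hc.2)
  have hec' : e ≠ c' := fun h => he.2 (h ▸ hc'.1)
  have hsub : S ∪ T ⊆ alphabetOf (combine f (countAtLeast S c k) (countAtLeast T c' l)) :=
    Set.union_subset
      (subset_alphabetOf_combine hf₁ hc.1 hd.1 (fun _ hx => not_mem_countAtLeast hx hd.2) k)
      (combine_flip f _ _ ▸ subset_alphabetOf_combine (f := flip f) hf₂ hc'.2 he.1
        (fun _ hx => not_mem_countAtLeast hx he.2) l)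
  let F : Option (Fin (k + 1)) × Option (Fin (l + 1)) → Language α :=
    fun o => combine f (countQuotient S c o.1) (countQuotient T c' o.2)
  have hF : F.Injective := by
    rintro ⟨o₁, o₂⟩ ⟨o₁', o₂'⟩ h
    have h₁ : o₁ = o₁' := countQuotient_eq_of_forall_mem_iff hc.1 hd.1 hdc fun t => by
      have hx : ∀ o : Option (Fin (l + 1)), List.replicate t c ++ [d] ∉ countQuotient T c' o :=
        fun _ => not_mem_countQuotient (by simp) hd.2
      exact (mem_combine_of_not_mem_right hf₁ (hx o₂)).symm.trans
        ((Iff.of_eq (congrArg (_ ∈ ·) h)).trans (mem_combine_of_not_mem_right hf₁ (hx o₂')))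
    have h₂ : o₂ = o₂' := countQuotient_eq_of_forall_mem_iff hc'.2 he.1 hec' fun t => by
      have hx : ∀ o : Option (Fin (k + 1)), List.replicate t c' ++ [e] ∉ countQuotient S c o :=
        fun _ => not_mem_countQuotient (by simp) he.2
      exact (mem_combine_of_not_mem_left hf₂ (hx o₁)).symm.trans
        ((Iff.of_eq (congrArg (_ ∈ ·) h)).trans (mem_combine_of_not_mem_left hf₂ (hx o₁')))
    rw [h₁, h₂]
  convert HasComplexity.of_injective hF (fun w => (countState S c k w, countState T c' l w))
    (fun w _ => ?_) (fun o => ⟨reachWord c e o.1 ++ reachWord c' d o.2, ?_, ?_⟩)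
  · simp [Nat.card_eq_fintype_card]
  · simp only [F, leftQuotient_combine, leftQuotient_countAtLeast_eq_countQuotient]
  · intro a ha
    apply hsub
    rcases List.mem_append.1 ha with ha | ha <;> rcases eq_or_eq_of_mem_reachWord ha with rfl | rfl
    exacts [Or.inl hc.1, Or.inr he.1, Or.inl hc'.1, Or.inl hd.1]
  · have hS : ∀ a ∈ reachWord c' d o.2, a ∈ S ∧ a ≠ c := fun a ha => by
      rcases eq_or_eq_of_mem_reachWord ha with rfl | rfl
      exacts [⟨hc'.1, hcc'.symm⟩, ⟨hd.1, hdc⟩]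
    have hT : ∀ a ∈ reachWord c e o.1, a ∈ T ∧ a ≠ c' := fun a ha => by
      rcases eq_or_eq_of_mem_reachWord ha with rfl | rfl
      exacts [⟨hc.2, hcc'⟩, ⟨he.1, hec'⟩]
    rw [countState_append_of_neutral_right hS, countState_append_of_neutral_left hT,
      countState_reachWord hc.1 he.2, countState_reachWord hc'.2 hd.2]

end Combine

/-- right ideals meeting the bound `(m+1)(n+1)` for union and
symmetric difference, with neither alphabet contained in the other. -/
theorem right_ideal_union_symmDiff_tight (m n : ℕ) (hm : 3 ≤ m) (hn : 3 ≤ n) :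
    ∃ L' L : Language (Fin 5), IsRightIdeal L' ∧ IsRightIdeal L ∧
      (alphabetOf L' \ alphabetOf L).Nonempty ∧
      (alphabetOf L \ alphabetOf L').Nonempty ∧
      HasComplexity L' m ∧ HasComplexity L n ∧
      HasComplexity (L' ⊔ L) ((m + 1) * (n + 1)) ∧
      HasComplexity ((L' \ L) ⊔ (L \ L')) ((m + 1) * (n + 1)) := by
  obtain ⟨k, rfl⟩ : ∃ k, m = k + 1 := ⟨m - 1, by omega⟩
  obtain ⟨l, rfl⟩ : ∃ l, n = l + 1 := ⟨n - 1, by omega⟩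
  have hS : (0 : Fin 5) ∈ ({0, 1, 2} : Set (Fin 5)) := by simp
  have hT : (1 : Fin 5) ∈ ({0, 1, 3} : Set (Fin 5)) := by simp
  have hcombine (f : Prop → Prop → Prop) (hf₁ : ∀ p, f p False ↔ p) (hf₂ : ∀ q, f False q ↔ q) :
      HasComplexity (combine f (countAtLeast ({0, 1, 2} : Set (Fin 5)) 0 k)
        (countAtLeast ({0, 1, 3} : Set (Fin 5)) 1 l)) ((k + 2) * (l + 2)) :=
    hasComplexity_combine_countAtLeast (d := 2) (e := 3) hf₁ hf₂ (by simp) (by simp) (by decide)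
      (by simp) (by simp) k l
  refine ⟨countAtLeast {0, 1, 2} 0 k, countAtLeast {0, 1, 3} 1 l,
    isRightIdeal_countAtLeast hS k, isRightIdeal_countAtLeast hT l, ?_, ?_,
    hasComplexity_countAtLeast hS k, hasComplexity_countAtLeast hT l,
    hcombine Or (fun _ => (or_false _).to_iff) (fun _ => (false_or _).to_iff),
    hcombine Xor (fun _ => by simp [xor_def]) (fun _ => by simp [xor_def])⟩
  · rw [alphabetOf_countAtLeast hS, alphabetOf_countAtLeast hT]
    exact ⟨2, by simp⟩
  · rw [alphabetOf_countAtLeast hS, alphabetOf_countAtLeast hT]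
    exact ⟨3, by simp⟩
end
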